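/- arXiv:1211.2024 — 9 statements merged into one kernel-verified Lean document; each statement's English description precedes it below -/
import Mathlib

section
/- (Crystallographic restriction) Let L be a lattice in ℝ³ and let H ≤ O(3) be a point group acting on L. Then every element h ∈ H has finite order, and its order lies in the set {1, 2, 3, 4, 6}. -/
/-!
Write `h` in a basis `b` of the lattice. Because `h` preserves `L = span ℤ b`, this matrix has
integer entries, and so do all of its powers; because `h` is orthogonal, the powers of `h` stay in
the compact group `O(3)`, so these integer matrices range over a compact set and there are only
finitely many of them. Hence `h` has finite order `n`, and its minimal polynomial over `ℚ` divides
`X ^ n - 1`, so it is a product of distinct cyclotomic polynomials `Φ_d` whose degrees `φ d` add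
up to at most `3`. This forces every such `d` into `{1, 2, 3, 4, 6}`, with at most one of
`3, 4, 6`, and `n` is the lcm of these `d`.
-/

/-- A *lattice* in `ℝ³`: a discrete cocompact additive subgroup of `ℝ³`, equivalently
the `ℤ`-span of an `ℝ`-basis of `ℝ³`. -/
def IsLattice (L : AddSubgroup (Fin 3 → ℝ)) : Prop :=
  ∃ b : Module.Basis (Fin 3) ℝ (Fin 3 → ℝ),
    (L : Set (Fin 3 → ℝ)) = ↑(Submodule.span ℤ (Set.range ⇑b))

open Polynomial Nat Matrix Set
open Submodule (span)

theorem prime_pow_dvd_twelve_of_totient_le_three {p k : ℕ} (hp : p.Prime) (h : φ (p ^ k) ≤ 3) :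
    p ^ k ∣ 12 := by
  rcases k with _ | k
  · simp
  rw [totient_prime_pow_succ hp] at h
  have hp2 := hp.two_le
  have hp1 : 1 ≤ p - 1 := by omega
  have hp4 : p ≤ 4 := by have := Nat.le_mul_of_pos_left (p - 1) (pow_pos hp.pos k); omega
  have hk : k ≤ 1 := by
    have : 2 ^ k ≤ 3 :=
      (pow_le_pow_left₀ (by norm_num) hp2 k).trans (le_of_mul_le_of_one_le_left h hp1)
    by_contra! hk
    have := pow_le_pow_right₀ (by norm_num : 1 ≤ 2) hk
    omega
  interval_cases p <;> interval_cases k <;> revert h <;> decide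

theorem dvd_twelve_of_totient_le_three {d : ℕ} (hd : 0 < d) (h : φ d ≤ 3) : d ∣ 12 :=
  (dvd_iff_prime_pow_dvd_dvd 12 d).2 fun _ _ hp hpk =>
    prime_pow_dvd_twelve_of_totient_le_three hp
      ((le_of_dvd (totient_pos.2 hd) (totient_dvd_of_dvd hpk)).trans h)

theorem lcm_mem_of_sum_totient_le_three {S : Finset ℕ} (h0 : 0 ∉ S)
    (h : ∑ d ∈ S, φ d ≤ 3) :
    S.lcm id ∈ ({1, 2, 3, 4, 6} : Set ℕ) := by
  have hS : S ∈ (divisors 12).powerset := Finset.mem_powerset.2 fun d hd =>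
    mem_divisors.2 ⟨dvd_twelve_of_totient_le_three (pos_of_ne_zero (ne_of_mem_of_not_mem hd h0))
      ((Finset.single_le_sum (fun _ _ => zero_le _) hd).trans h), by norm_num⟩
  have key : ∀ T ∈ (divisors 12).powerset, ∑ d ∈ T, φ d ≤ 3 →
      T.lcm id ∈ ({1, 2, 3, 4, 6} : Finset ℕ) := by decide
  simpa using key S hS h

section CyclotomicFactors

variable {A : Type*} [Ring A] [Algebra ℚ A]

theorem exists_minpoly_eq_prod_cyclotomic_of_pow_eq_one {a : A} {n : ℕ} (hn : 0 < n)
    (ha : a ^ n = 1) : ∃ S ⊆ n.divisors, minpoly ℚ a = ∏ d ∈ S, cyclotomic d ℚ := by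
  classical
  set μ := minpoly ℚ a
  have hμ : μ ∣ X ^ n - 1 := minpoly.dvd ℚ a (by simp [ha])
  set S := {d ∈ n.divisors | cyclotomic d ℚ ∣ μ}
  refine ⟨S, Finset.filter_subset _ _, ?_⟩
  have hSμ : ∏ d ∈ S, cyclotomic d ℚ ∣ μ := Finset.prod_dvd_of_coprime
    (fun _ _ _ _ hde => cyclotomic.isCoprime_rat hde) fun d hd => (Finset.mem_filter.1 hd).2
  -- `μ` is coprime to every cyclotomic factor of `X ^ n - 1` that does not divide it
  have hμS : μ ∣ ∏ d ∈ S, cyclotomic d ℚ := by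
    rw [← prod_cyclotomic_eq_X_pow_sub_one hn, ← Finset.prod_filter_mul_prod_filter_not
      n.divisors (fun d => cyclotomic d ℚ ∣ μ)] at hμ
    refine (IsCoprime.prod_right fun d hd => ?_).dvd_of_dvd_mul_right hμ
    obtain ⟨hd, hdμ⟩ := Finset.mem_filter.1 hd
    exact ((cyclotomic.irreducible_rat (pos_of_mem_divisors hd)).coprime_iff_not_dvd.2 hdμ).symm
  have hmonic : μ.Monic :=
    minpoly.monic ⟨X ^ n - 1, monic_X_pow_sub (by simp [hn]), by simp [ha]⟩
  exact eq_of_monic_of_associated hmonic (monic_prod_of_monic _ _ fun d _ => cyclotomic.monic d ℚ)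
    (associated_of_dvd_dvd hμS hSμ)

theorem exists_minpoly_eq_prod_cyclotomic_and_orderOf_eq_lcm {a : A} (ha : IsOfFinOrder a) :
    ∃ S : Finset ℕ, 0 ∉ S ∧ minpoly ℚ a = ∏ d ∈ S, cyclotomic d ℚ ∧
      orderOf a = S.lcm id := by
  obtain ⟨S, hS, hμ⟩ :=
    exists_minpoly_eq_prod_cyclotomic_of_pow_eq_one ha.orderOf_pos (pow_orderOf_eq_one a)
  have h0 : 0 ∉ S := fun h => by simpa using hS h
  refine ⟨S, h0, hμ, dvd_antisymm (orderOf_dvd_of_pow_eq_one ?_)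
    (Finset.lcm_dvd fun d hd => dvd_of_mem_divisors (hS hd))⟩
  have hm : S.lcm id ≠ 0 := by simpa [Finset.lcm_eq_zero_iff] using h0
  have hμm : minpoly ℚ a ∣ X ^ S.lcm id - 1 := by
    rw [hμ, ← prod_cyclotomic_eq_X_pow_sub_one (pos_of_ne_zero hm)]
    exact Finset.prod_dvd_prod_of_subset _ _ _ fun d hd =>
      mem_divisors.2 ⟨Finset.dvd_lcm hd, hm⟩
  simpa [sub_eq_zero] using minpoly.dvd_iff.1 hμm

end CyclotomicFactors

theorem Matrix.orderOf_mem_of_card_le_three {ι : Type*} [Fintype ι] [DecidableEq ι]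
    (hι : Fintype.card ι ≤ 3) (M : Matrix ι ι ℚ) (hM : IsOfFinOrder M) :
    orderOf M ∈ ({1, 2, 3, 4, 6} : Set ℕ) := by
  obtain ⟨S, h0, hμ, hord⟩ := exists_minpoly_eq_prod_cyclotomic_and_orderOf_eq_lcm hM
  have hdeg : ∑ d ∈ S, φ d ≤ 3 := calc
    ∑ d ∈ S, φ d = (minpoly ℚ M).natDegree := by
      rw [hμ, natDegree_prod _ _ fun d _ => cyclotomic_ne_zero d ℚ]
      simp only [natDegree_cyclotomic]
    _ ≤ M.charpoly.natDegree :=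
      natDegree_le_of_dvd M.minpoly_dvd_charpoly M.charpoly_monic.ne_zero
    _ ≤ 3 := by rwa [charpoly_natDegree_eq_dim]
  exact hord ▸ lcm_mem_of_sum_totient_le_three h0 hdeg

section ChangeOfBasis

variable {ι : Type*} [Fintype ι]

theorem finite_setOf_map_intCast_mem {K : Set (Matrix ι ι ℝ)} (hK : IsCompact K) :
    {M : Matrix ι ι ℤ | M.map (↑) ∈ K}.Finite := by
  have hZ : ∀ i j, {z : ℤ | (z : ℝ) ∈ (fun A : Matrix ι ι ℝ => A i j) '' K}.Finite :=
    fun i j => (Int.isClosedEmbedding_coe_real.isCompact_preimage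
      (hK.image (continuous_apply_apply i j))).finite_of_discrete
  refine (Set.Finite.pi fun i => Set.Finite.pi fun j => hZ i j).subset ?_
  intro M hM i _ j _
  exact ⟨_, hM, rfl⟩

variable [DecidableEq ι]

theorem Matrix.isCompact_unitaryGroup {𝕜 : Type*} [RCLike 𝕜] :
    IsCompact (unitaryGroup ι 𝕜 : Set (Matrix ι ι 𝕜)) := by
  have hclosed : IsClosed (unitaryGroup ι 𝕜 : Set (Matrix ι ι 𝕜)) := by
    have : (unitaryGroup ι 𝕜 : Set (Matrix ι ι 𝕜)) = (fun A => A * star A) ⁻¹' {1} := by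
      ext A
      exact mem_unitaryGroup_iff
    rw [this]
    exact isClosed_singleton.preimage (by fun_prop)
  refine (isCompact_univ_pi fun _ => isCompact_univ_pi fun _ =>
    isCompact_closedBall (0 : 𝕜) 1).of_isClosed_subset hclosed ?_
  intro A hA i _ j _
  simpa using entry_norm_bound_of_unitary hA i j

noncomputable def changeOfBasis {R : Type*} [CommRing R] (b : Module.Basis ι R (ι → R)) :
    Matrix ι ι R ≃ₐ[R] Matrix ι ι R :=
  Matrix.toLinAlgEquiv'.trans (LinearMap.toMatrixAlgEquiv b)

theorem changeOfBasis_apply {R : Type*} [CommRing R] (b : Module.Basis ι R (ι → R))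
    (A : Matrix ι ι R) (i j : ι) : changeOfBasis b A i j = b.repr (A *ᵥ b j) i := by
  simp [changeOfBasis, LinearMap.toMatrixAlgEquiv_apply]

theorem changeOfBasis_mem_range_mapMatrix {K : Type*} [Field K] [CharZero K]
    (b : Module.Basis ι K (ι → K)) {A : Matrix ι ι K}
    (hA : MapsTo (A *ᵥ ·) (span ℤ (range b)) (span ℤ (range b))) :
    changeOfBasis b A ∈ (Int.castRingHom K).mapMatrix.range := by
  have hint : ∀ i j, ∃ z : ℤ, (z : K) = changeOfBasis b A i j := fun i j => by
    simpa [changeOfBasis_apply] using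
      (b.mem_span_iff_repr_mem ℤ _).1 (hA (Submodule.subset_span (mem_range_self j))) i
  choose M hM using hint
  exact ⟨Matrix.of M, by ext i j; simp [hM]⟩

variable (b : Module.Basis ι ℝ (ι → ℝ)) (U : orthogonalGroup ι ℝ)

theorem isOfFinOrder_of_mapsTo_span
    (hU : MapsTo ((U : Matrix ι ι ℝ) *ᵥ ·) (span ℤ (range b)) (span ℤ (range b))) :
    IsOfFinOrder U := by
  let ψ : orthogonalGroup ι ℝ →* Matrix ι ι ℝ :=
    (changeOfBasis b : Matrix ι ι ℝ →* Matrix ι ι ℝ).comp (orthogonalGroup ι ℝ).subtype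
  have hψ : Function.Injective ψ := (changeOfBasis b).injective.comp Subtype.val_injective
  have hK : IsCompact (changeOfBasis b '' unitaryGroup ι ℝ) := isCompact_unitaryGroup.image
    (LinearMap.continuous_of_finiteDimensional (changeOfBasis b).toLinearMap)
  rw [← finite_powers]
  refine (((finite_setOf_map_intCast_mem hK).image (Matrix.map · Int.cast)).preimage
    hψ.injOn).subset ?_
  rintro _ ⟨k, rfl⟩
  obtain ⟨M, hM⟩ := pow_mem (changeOfBasis_mem_range_mapMatrix b hU) k
  refine ⟨M, ⟨U ^ k, (U ^ k).2, ?_⟩, ?_⟩ <;> simp [ψ, map_pow, ← hM]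

theorem exists_rat_matrix_orderOf_eq_of_mapsTo_span
    (hU : MapsTo ((U : Matrix ι ι ℝ) *ᵥ ·) (span ℤ (range b)) (span ℤ (range b))) :
    ∃ M : Matrix ι ι ℚ, orderOf M = orderOf U := by
  obtain ⟨M, hM⟩ := changeOfBasis_mem_range_mapMatrix b hU
  refine ⟨M.map (↑), ?_⟩
  calc orderOf (M.map (Int.cast : ℤ → ℚ))
      = orderOf M := orderOf_injective (Int.castRingHom ℚ).mapMatrix.toMonoidHom
          (map_injective Int.cast_injective) M
    _ = orderOf ((Int.castRingHom ℝ).mapMatrix M) := (orderOf_injective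
          (Int.castRingHom ℝ).mapMatrix.toMonoidHom (map_injective Int.cast_injective) M).symm
    _ = orderOf U := by
      rw [hM, ← orderOf_submonoid U]
      exact (changeOfBasis b).toMulEquiv.orderOf_eq _

end ChangeOfBasis

/-- **the crystallographic restriction.**  Let `L` be a lattice in `ℝ³`
and let `H ≤ O(3)` be a point group acting on `L`.  Then every element `h ∈ H` has
finite order, and its order lies in `{1, 2, 3, 4, 6}`. -/
theorem crystallographic_restriction (L : AddSubgroup (Fin 3 → ℝ)) (hL : IsLattice L)
    (H : Subgroup (Matrix.orthogonalGroup (Fin 3) ℝ))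
    (hHL : ∀ h ∈ H, (fun v => Matrix.mulVec ((h : Matrix (Fin 3) (Fin 3) ℝ)) v) ''
      (L : Set (Fin 3 → ℝ)) = (L : Set (Fin 3 → ℝ))) :
    ∀ h ∈ H, IsOfFinOrder h ∧ orderOf h ∈ ({1, 2, 3, 4, 6} : Set ℕ) := by
  obtain ⟨b, hb⟩ := hL
  intro h hH
  have hmaps :
      MapsTo ((h : Matrix (Fin 3) (Fin 3) ℝ) *ᵥ ·) (span ℤ (range b)) (span ℤ (range b)) := by
    rw [← hb]
    exact mapsTo_iff_image_subset.2 (hHL h hH).subset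
  have hfin := isOfFinOrder_of_mapsTo_span b h hmaps
  obtain ⟨M, hM⟩ := exists_rat_matrix_orderOf_eq_of_mapsTo_span b h hmaps
  refine ⟨hfin, hM ▸ M.orderOf_mem_of_card_le_three (by simp) ?_⟩
  rwa [← orderOf_pos_iff, hM, orderOf_pos_iff]
end

section
/- Let H ≤ SO(3) be a nontrivial point group (so H is finite). Then, summing over a set T of representatives of the H-orbits on the set of pole vectors of H, one has the identity 2 − 2/|H| = Σ_{v ∈ T} (1 − 1/|H_v|), where H_v = {h ∈ H : h·v = v}. -/
/-- `v` is a *pole vector* of `H`: a unit vector fixed by some nontrivial element of `H`. -/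
def IsPoleVector (H : Subgroup (Matrix.orthogonalGroup (Fin 3) ℝ)) (v : Fin 3 → ℝ) : Prop :=
  dotProduct v v = 1 ∧
    ∃ h ∈ H, h ≠ 1 ∧ Matrix.mulVec ((h : Matrix (Fin 3) (Fin 3) ℝ)) v = v

/-- `v` and `w` lie in the same `H`-orbit. -/
def SameOrbit (H : Subgroup (Matrix.orthogonalGroup (Fin 3) ℝ)) (v w : Fin 3 → ℝ) : Prop :=
  ∃ h ∈ H, Matrix.mulVec ((h : Matrix (Fin 3) (Fin 3) ℝ)) v = w

/-- The order of the stabilizer `H_v = {h ∈ H : h · v = v}`. -/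
noncomputable def stabOrder (H : Subgroup (Matrix.orthogonalGroup (Fin 3) ℝ))
    (v : Fin 3 → ℝ) : ℕ :=
  Nat.card {h : Matrix.orthogonalGroup (Fin 3) ℝ //
    h ∈ H ∧ Matrix.mulVec ((h : Matrix (Fin 3) (Fin 3) ℝ)) v = v}

/-!
A nontrivial rotation `g ∈ SO(3)` fixes exactly two unit vectors, `±` its axis, and every unit
vector fixed by a nontrivial element of `H` is a pole. Counting the pairs `(g, p)` with `g ≠ 1` and
`g • p = p` in two ways gives `2 (|H| - 1) = ∑_p (|H_p| - 1)`; grouping the poles into orbits and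
using `|H · v| |H_v| = |H|` turns the right-hand side into `|H| ∑_{v ∈ T} (1 - 1 / |H_v|)`.
The group `H` is finite because each `h ∈ H` is determined by the images of a lattice basis `bᵢ`,
and `h bᵢ` is one of the finitely many lattice points of the same length as `bᵢ`.
-/

open Finset Matrix MulAction

namespace Matrix

theorem isBounded_setOf_dotProduct_self_le {n : Type*} [Fintype n] (c : ℝ) :
    Bornology.IsBounded {y : n → ℝ | y ⬝ᵥ y ≤ c} := by
  refine isBounded_iff_forall_norm_le.2 ⟨|c| + 1, fun y (hy : y ⬝ᵥ y ≤ c) => ?_⟩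
  refine (pi_norm_le_iff_of_nonneg (by positivity)).2 fun i => ?_
  have hi : y i * y i ≤ y ⬝ᵥ y :=
    single_le_sum (f := fun j => y j * y j) (fun j _ => mul_self_nonneg _) (mem_univ i)
  rw [Real.norm_eq_abs]
  nlinarith [abs_mul_abs_self (y i), abs_nonneg (y i), le_abs_self c]

variable {n R : Type*} [Fintype n] [DecidableEq n]

theorem dotProduct_mulVec_mulVec_of_mem_orthogonalGroup [CommRing R] {A : Matrix n n R}
    (hA : A ∈ orthogonalGroup n R) (x y : n → R) : A *ᵥ x ⬝ᵥ A *ᵥ y = x ⬝ᵥ y := by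
  rw [dotProduct_mulVec, ← mulVec_transpose, mulVec_mulVec, (mem_orthogonalGroup_iff' n R).1 hA,
    one_mulVec]

/-- In odd dimension, `det (A - 1) = det (Aᵀ (1 - A)) = - det (A - 1)`. -/
theorem det_sub_one_eq_zero_of_mem_specialOrthogonalGroup [Field R] [CharZero R]
    (hn : Odd (Fintype.card n)) {A : Matrix n n R} (hA : A ∈ specialOrthogonalGroup n R) :
    (A - 1).det = 0 := by
  have hdet : A.det = 1 := hA.2
  have htr : (A - 1)ᵀ = Aᵀ * -(A - 1) := by
    rw [mul_neg, mul_sub, (mem_orthogonalGroup_iff' n R).1 hA.1, mul_one, transpose_sub,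
      transpose_one, neg_sub]
  have h := congrArg det htr
  rw [det_transpose, det_mul, det_transpose, hdet, one_mul, det_neg, hn.neg_one_pow,
    neg_one_mul, eq_neg_iff_add_eq_zero, ← two_mul] at h
  exact (mul_eq_zero.1 h).resolve_left two_ne_zero

theorem exists_ne_zero_mulVec_eq_self [Field R] [CharZero R] (hn : Odd (Fintype.card n))
    {A : Matrix n n R} (hA : A ∈ specialOrthogonalGroup n R) : ∃ v ≠ 0, A *ᵥ v = v := by
  obtain ⟨v, hv, hAv⟩ :=
    exists_mulVec_eq_zero_iff.2 (det_sub_one_eq_zero_of_mem_specialOrthogonalGroup hn hA)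
  exact ⟨v, hv, by rwa [sub_mulVec, one_mulVec, sub_eq_zero] at hAv⟩

/-- With `z = u ⨯₃ w`, the matrix with rows `u, w, z` has determinant `z ⬝ᵥ z ≠ 0`, and comparing
it with the matrix with rows `u, w, A z` gives `A z ⬝ᵥ z = z ⬝ᵥ z = A z ⬝ᵥ A z`, hence `A z = z`. -/
theorem eq_one_of_linearIndependent_of_mulVec_eq_self {A : Matrix (Fin 3) (Fin 3) ℝ}
    (hA : A ∈ specialOrthogonalGroup (Fin 3) ℝ) {u w : Fin 3 → ℝ}
    (huw : LinearIndependent ℝ ![u, w]) (hu : A *ᵥ u = u) (hw : A *ᵥ w = w) : A = 1 := by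
  have hdet : A.det = 1 := hA.2
  set z := u ⨯₃ w
  have hdet_rows : ∀ x, (of ![u, w, x]).det = x ⬝ᵥ z := fun x =>
    (triple_product_eq_det u w x).symm.trans <| by
      rw [triple_product_permutation, triple_product_permutation]
  have hrows : ∀ x, of ![u, w, x] * Aᵀ = of ![u, w, A *ᵥ x] := fun x => by
    funext i
    fin_cases i
    exacts [(vecMul_transpose A u).trans hu, (vecMul_transpose A w).trans hw, vecMul_transpose A x]
  have hz : A *ᵥ z = z := by
    have h1 : A *ᵥ z ⬝ᵥ z = z ⬝ᵥ z := by
      rw [← hdet_rows, ← hrows, det_mul, det_transpose, hdet, mul_one, hdet_rows]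
    have h2 : A *ᵥ z ⬝ᵥ A *ᵥ z = z ⬝ᵥ z :=
      dotProduct_mulVec_mulVec_of_mem_orthogonalGroup hA.1 z z
    have h3 : (A *ᵥ z - z) ⬝ᵥ (A *ᵥ z - z) = 0 := by
      rw [sub_dotProduct, dotProduct_sub, dotProduct_sub, h2, h1, dotProduct_comm z (A *ᵥ z), h1]
      ring
    exact sub_eq_zero.1 (dotProduct_self_eq_zero.1 h3)
  have hM : IsUnit (of ![u, w, z]) := by
    rw [isUnit_iff_isUnit_det, hdet_rows, isUnit_iff_ne_zero]
    exact dotProduct_self_eq_zero.not.2 (crossProduct_ne_zero_iff_linearIndependent.2 huw)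
  have hAT : Aᵀ = 1 := hM.mul_left_cancel (by rw [hrows, hz, mul_one])
  simpa using congrArg transpose hAT

theorem exists_dotProduct_self_eq_one_mulVec_eq_self {A : Matrix (Fin 3) (Fin 3) ℝ}
    (hA : A ∈ specialOrthogonalGroup (Fin 3) ℝ) : ∃ u, u ⬝ᵥ u = 1 ∧ A *ᵥ u = u := by
  obtain ⟨v, hv, hAv⟩ := exists_ne_zero_mulVec_eq_self (by decide) hA
  have hpos : 0 < v ⬝ᵥ v := by simpa using dotProduct_star_self_pos_iff.2 hv
  refine ⟨(√(v ⬝ᵥ v))⁻¹ • v, ?_, by rw [mulVec_smul, hAv]⟩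
  rw [smul_dotProduct, dotProduct_smul, smul_eq_mul, smul_eq_mul, ← mul_assoc, ← mul_inv,
    Real.mul_self_sqrt hpos.le, inv_mul_cancel₀ hpos.ne']

theorem ncard_setOf_dotProduct_self_eq_one_mulVec_eq_self {A : Matrix (Fin 3) (Fin 3) ℝ}
    (hA : A ∈ specialOrthogonalGroup (Fin 3) ℝ) (hA1 : A ≠ 1) :
    {x | x ⬝ᵥ x = 1 ∧ A *ᵥ x = x}.ncard = 2 := by
  obtain ⟨u, hu1, hAu⟩ := exists_dotProduct_self_eq_one_mulVec_eq_self hA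
  have hu0 : u ≠ 0 := by rintro rfl; simp at hu1
  suffices h : {x | x ⬝ᵥ x = 1 ∧ A *ᵥ x = x} = {u, -u} by
    rw [h, Set.ncard_pair (mt self_eq_neg.1 hu0)]
  ext x
  refine ⟨fun ⟨hx1, hAx⟩ => ?_, ?_⟩
  · have hdep : ¬LinearIndependent ℝ ![x, u] := fun h =>
      hA1 (eq_one_of_linearIndependent_of_mulVec_eq_self hA h hAx hAu)
    obtain ⟨a, rfl⟩ : ∃ a : ℝ, a • u = x := by
      simpa [linearIndependent_fin2, hu0] using hdep
    have ha : a * a = 1 := by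
      simpa [smul_dotProduct, dotProduct_smul, hu1, mul_assoc] using hx1
    rcases mul_self_eq_one_iff.1 ha with rfl | rfl <;> simp
  · rintro (rfl | rfl) <;> simp [mulVec_neg, hu1, hAu]

end Matrix

namespace MulAction

variable {G α : Type*} [Group G] [MulAction G α]

theorem card_stabilizer_mul_ncard_orbit (a : α) :
    Nat.card (stabilizer G a) * (orbit G a).ncard = Nat.card G := by
  rw [← index_stabilizer, Subgroup.card_mul_index]

theorem card_stabilizer_of_mem_orbit {a b : α} (h : b ∈ orbit G a) :
    Nat.card (stabilizer G b) = Nat.card (stabilizer G a) := by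
  obtain ⟨g, rfl⟩ := h
  rw [stabilizer_smul_eq_stabilizer_map_conj]
  exact Subgroup.card_map_of_injective (MulEquiv.injective _)

variable [Fintype G] [DecidableEq α]

theorem mem_image_smul_iff {a b : α} : b ∈ univ.image (· • a : G → α) ↔ b ∈ orbit G a := by
  simp [mem_orbit_iff]

theorem card_image_smul (a : α) : #(univ.image (· • a : G → α)) = (orbit G a).ncard := by
  rw [← Set.ncard_coe_finset, coe_image, coe_univ, Set.image_univ]
  rfl

theorem sum_card_filter_smul_eq_self (P : Finset α) :
    ∑ g : G, #{p ∈ P | g • p = p} = ∑ p ∈ P, Nat.card (stabilizer G p) := by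
  classical
  simp_rw [card_filter]
  rw [sum_comm]
  refine sum_congr rfl fun p _ => ?_
  rw [← card_filter, Nat.card_eq_fintype_card, Fintype.card_subtype]
  rfl

variable {P T : Finset α} (hTP : ∀ v ∈ T, orbit G v ⊆ P)
  (hPT : ∀ p ∈ P, ∃! v, v ∈ T ∧ p ∈ orbit G v)
include hTP hPT

theorem sum_eq_sum_sum_orbit {M : Type*} [AddCommMonoid M] (f : α → M) :
    ∑ p ∈ P, f p = ∑ v ∈ T, ∑ p ∈ univ.image (· • v : G → α), f p := by
  have hP : P = T.biUnion fun v => univ.image (· • v : G → α) := by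
    ext p
    simp only [mem_biUnion, mem_image_smul_iff]
    refine ⟨fun hp => ?_, fun ⟨v, hv, hpv⟩ => hTP v hv hpv⟩
    obtain ⟨v, ⟨hv, hpv⟩, -⟩ := hPT p hp
    exact ⟨v, hv, hpv⟩
  rw [hP, sum_biUnion]
  intro v hv w hw hvw
  refine disjoint_left.2 fun p hpv hpw => hvw ?_
  rw [mem_image_smul_iff] at hpv hpw
  exact (hPT p (hTP v hv hpv)).unique ⟨hv, hpv⟩ ⟨hw, hpw⟩

theorem sum_card_stabilizer_eq_card_mul_card :
    ∑ p ∈ P, Nat.card (stabilizer G p) = #T * Nat.card G := by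
  rw [sum_eq_sum_sum_orbit hTP hPT, ← smul_eq_mul, ← sum_const]
  refine sum_congr rfl fun v _ => ?_
  rw [sum_congr rfl fun p hp => card_stabilizer_of_mem_orbit (mem_image_smul_iff.1 hp),
    sum_const, smul_eq_mul, card_image_smul, mul_comm, card_stabilizer_mul_ncard_orbit]

theorem card_eq_sum_ncard_orbit : #P = ∑ v ∈ T, (orbit G v).ncard := by
  rw [card_eq_sum_ones, sum_eq_sum_sum_orbit hTP hPT]
  simp_rw [← card_eq_sum_ones, card_image_smul]

theorem card_mul_sum_one_sub_inv_card_stabilizer [DecidableEq G] :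
    (Nat.card G : ℝ) * ∑ v ∈ T, (1 - 1 / (Nat.card (stabilizer G v) : ℝ)) =
      ∑ g ∈ univ.erase (1 : G), #{p ∈ P | g • p = p} := by
  have hfix : ∑ g : G, #{p ∈ P | g • p = p} =
      #P + ∑ g ∈ univ.erase (1 : G), #{p ∈ P | g • p = p} := by
    rw [← add_sum_erase _ _ (mem_univ 1)]
    simp
  have horbit : ∀ v : α, (Nat.card G : ℝ) * (1 - 1 / Nat.card (stabilizer G v)) =
      Nat.card G - (orbit G v).ncard := fun v => by
    have hpos : (0 : ℝ) < Nat.card (stabilizer G v) := by exact_mod_cast Nat.card_pos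
    rw [← card_stabilizer_mul_ncard_orbit v]
    push_cast
    field_simp
  have hcount :=
    (sum_card_filter_smul_eq_self P).trans (sum_card_stabilizer_eq_card_mul_card hTP hPT)
  rw [hfix, card_eq_sum_ncard_orbit hTP hPT] at hcount
  rw [mul_sum, sum_congr rfl fun v _ => horbit v, sum_sub_distrib, sum_const, nsmul_eq_mul]
  have := congrArg (Nat.cast : ℕ → ℝ) hcount
  push_cast at this ⊢
  linarith

end MulAction

theorem finite_of_isLattice {L : AddSubgroup (Fin 3 → ℝ)} (hL : IsLattice L)
    {H : Subgroup (orthogonalGroup (Fin 3) ℝ)}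
    (hHL : ∀ h ∈ H, (fun v => (h : Matrix (Fin 3) (Fin 3) ℝ) *ᵥ v) '' (L : Set (Fin 3 → ℝ)) =
      (L : Set (Fin 3 → ℝ))) : Finite H := by
  obtain ⟨b, hb⟩ := hL
  let φ : H → Fin 3 → Fin 3 → ℝ := fun h i => (h : Matrix (Fin 3) (Fin 3) ℝ) *ᵥ b i
  have hφ : Function.Injective φ := fun g h hgh =>
    Subtype.ext <| Subtype.ext <| toLin'.injective <| b.ext fun i => congrFun hgh i
  have hrange : Set.range φ ⊆ Set.univ.pi fun i =>
      {y | y ⬝ᵥ y ≤ b i ⬝ᵥ b i} ∩ (Submodule.span ℤ (Set.range b) : Set (Fin 3 → ℝ)) := by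
    rintro _ ⟨h, rfl⟩ i -
    refine ⟨(dotProduct_mulVec_mulVec_of_mem_orthogonalGroup h.1.2 _ _).le, ?_⟩
    rw [← hb, ← hHL h h.2]
    exact ⟨b i, hb ▸ Submodule.subset_span (Set.mem_range_self i), rfl⟩
  have : Finite (Set.range φ) :=
    ((Set.Finite.pi fun i => ZSpan.setFinite_inter b
      (isBounded_setOf_dotProduct_self_le (b i ⬝ᵥ b i))).subset hrange).to_subtype
  exact Finite.of_injective_finite_range hφ

section Poles

/-- Found through the generic instances, this `SMul` exceeds the default heartbeat budget. -/
instance (H : Subgroup (orthogonalGroup (Fin 3) ℝ)) : SMul H (Fin 3 → ℝ) :=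
  Subgroup.instMulAction.toSMul

variable {H : Subgroup (orthogonalGroup (Fin 3) ℝ)}

theorem sameOrbit_iff_mem_orbit {v w : Fin 3 → ℝ} : SameOrbit H v w ↔ w ∈ orbit H v :=
  ⟨fun ⟨h, hH, hv⟩ => ⟨⟨h, hH⟩, hv⟩, fun ⟨h, hv⟩ => ⟨h, h.2, hv⟩⟩

theorem stabOrder_eq_card_stabilizer (v : Fin 3 → ℝ) :
    stabOrder H v = Nat.card (stabilizer H v) :=
  Nat.card_congr (Equiv.subtypeSubtypeEquivSubtypeInter (· ∈ H) _).symm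

theorem IsPoleVector.smul {v : Fin 3 → ℝ} (hv : IsPoleVector H v) (g : H) :
    IsPoleVector H (g • v) := by
  obtain ⟨hv1, h, hH, h1, hhv⟩ := hv
  let h' : H := ⟨h, hH⟩
  have hh'v : h' • v = v := hhv
  refine ⟨(dotProduct_mulVec_mulVec_of_mem_orthogonalGroup g.1.2 v v).trans hv1,
    ↑(g * h' * g⁻¹), (g * h' * g⁻¹).2, ?_, ?_⟩
  · rwa [Subgroup.coe_mul, Subgroup.coe_mul, Subgroup.coe_inv, Ne, mul_inv_eq_one, mul_eq_left]
  · change (g * h' * g⁻¹) • g • v = g • v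
    rw [mul_smul, mul_smul, inv_smul_smul, hh'v]

variable (hSO : ∀ h ∈ H, (h : Matrix (Fin 3) (Fin 3) ℝ).det = 1)
include hSO

theorem ncard_setOf_isPoleVector_smul_eq_self {g : H} (hg : g ≠ 1) :
    {v | IsPoleVector H v ∧ g • v = v}.ncard = 2 := by
  have hset : {v | IsPoleVector H v ∧ g • v = v} =
      {x | x ⬝ᵥ x = 1 ∧ (g : Matrix (Fin 3) (Fin 3) ℝ) *ᵥ x = x} := by
    ext v
    exact ⟨fun ⟨⟨hv1, _⟩, hgv⟩ => ⟨hv1, hgv⟩,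
      fun ⟨hv1, hgv⟩ => ⟨⟨hv1, g, g.2, fun h => hg (Subtype.ext h), hgv⟩, hgv⟩⟩
  rw [hset]
  exact ncard_setOf_dotProduct_self_eq_one_mulVec_eq_self ⟨g.1.2, hSO g g.2⟩
    fun h => hg (Subtype.ext (Subtype.ext h))

theorem finite_setOf_isPoleVector [Finite H] : {v | IsPoleVector H v}.Finite := by
  refine ((Set.toFinite {g : H | g ≠ 1}).biUnion
    (t := fun g => {v | IsPoleVector H v ∧ g • v = v}) fun g hg => ?_).subset ?_
  · exact Set.finite_of_ncard_pos (by rw [ncard_setOf_isPoleVector_smul_eq_self hSO hg]; norm_num)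
  · intro v hv
    obtain ⟨-, h, hH, h1, hhv⟩ := id hv
    exact Set.mem_biUnion (x := ⟨h, hH⟩) (fun e => h1 (congrArg Subtype.val e)) ⟨hv, hhv⟩

theorem card_filter_isPoleVector_smul_eq_self {P : Finset (Fin 3 → ℝ)}
    (hP : ∀ v, v ∈ P ↔ IsPoleVector H v) {g : H} (hg : g ≠ 1) : #{p ∈ P | g • p = p} = 2 := by
  rw [← Set.ncard_coe_finset, ← ncard_setOf_isPoleVector_smul_eq_self hSO hg]
  congr 1
  ext v
  simp [hP]

end Poles

theorem pole_orbit_formula_general (L : AddSubgroup (Fin 3 → ℝ)) (hL : IsLattice L)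
    (H : Subgroup (Matrix.orthogonalGroup (Fin 3) ℝ))
    (hHL : ∀ h ∈ H, (fun v => Matrix.mulVec ((h : Matrix (Fin 3) (Fin 3) ℝ)) v) ''
      (L : Set (Fin 3 → ℝ)) = (L : Set (Fin 3 → ℝ)))
    (hSO : ∀ h ∈ H, ((h : Matrix (Fin 3) (Fin 3) ℝ)).det = 1)
    (T : Finset (Fin 3 → ℝ))
    (hT : ∀ v ∈ T, IsPoleVector H v)
    (hrep : ∀ p : Fin 3 → ℝ, IsPoleVector H p → ∃! v, v ∈ T ∧ SameOrbit H v p) :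
    2 - 2 / (Nat.card H : ℝ) = ∑ v ∈ T, (1 - 1 / (stabOrder H v : ℝ)) := by
  classical
  have := finite_of_isLattice hL hHL
  let := Fintype.ofFinite H
  set P := (finite_setOf_isPoleVector hSO).toFinset
  have hP : ∀ v, v ∈ P ↔ IsPoleVector H v := fun v => Set.Finite.mem_toFinset _
  have hTP : ∀ v ∈ T, orbit H v ⊆ P := by
    rintro v hv _ ⟨g, rfl⟩
    exact (hP _).2 ((hT v hv).smul g)
  have hPT : ∀ p ∈ P, ∃! v, v ∈ T ∧ p ∈ orbit H v := fun p hp => by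
    simpa only [sameOrbit_iff_mem_orbit] using hrep p ((hP p).1 hp)
  have hcount := card_mul_sum_one_sub_inv_card_stabilizer hTP hPT
  rw [sum_congr rfl fun g hg => card_filter_isPoleVector_smul_eq_self hSO hP (ne_of_mem_erase hg),
    sum_const, card_erase_of_mem (mem_univ 1), card_univ, ← Nat.card_eq_fintype_card,
    smul_eq_mul] at hcount
  simp_rw [stabOrder_eq_card_stabilizer]
  have hpos : 0 < Nat.card H := Nat.card_pos
  have hposR : (0 : ℝ) < Nat.card H := by exact_mod_cast hpos
  push_cast [Nat.cast_sub hpos] at hcount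
  field_simp
  linarith

/-- Let `H ≤ SO(3)` be a nontrivial point group.  Then, summing over a
set `T` of representatives of the `H`-orbits on the set of pole vectors of `H`, one has
`2 - 2/|H| = ∑_{v ∈ T} (1 - 1/|H_v|)`. -/
theorem pole_orbit_formula (L : AddSubgroup (Fin 3 → ℝ)) (hL : IsLattice L)
    (H : Subgroup (Matrix.orthogonalGroup (Fin 3) ℝ))
    (hHL : ∀ h ∈ H, (fun v => Matrix.mulVec ((h : Matrix (Fin 3) (Fin 3) ℝ)) v) ''
      (L : Set (Fin 3 → ℝ)) = (L : Set (Fin 3 → ℝ)))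
    (hSO : ∀ h ∈ H, ((h : Matrix (Fin 3) (Fin 3) ℝ)).det = 1)
    (hne : H ≠ ⊥)
    (T : Finset (Fin 3 → ℝ))
    (hT : ∀ v ∈ T, IsPoleVector H v)
    (hrep : ∀ p : Fin 3 → ℝ, IsPoleVector H p → ∃! v, v ∈ T ∧ SameOrbit H v p) :
    2 - 2 / (Nat.card H : ℝ) = ∑ v ∈ T, (1 - 1 / (stabOrder H v : ℝ)) :=
  pole_orbit_formula_general L hL H hHL hSO T hT hrep
end

section
/- Let H be a point group acting on a lattice L in ℝ³, let h ∈ H ∩ SO(3) with h ≠ 1, and let ℓ = {v ∈ ℝ³ : h·v = v} be the (one-dimensional) line fixed by h. Then ℓ contains a non-zero element of L. -/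
/-!
A rotation `A` of odd-dimensional space satisfies `det (A - 1) = det (1 - Aᵀ) = -det (A - 1)`,
so `1` is an eigenvalue. If `A` preserves the `ℤ`-span of a basis, its matrix in that basis is
integral, hence `A - 1` restricted to the lattice is a `ℤ`-linear map with vanishing
determinant, and it kills a non-zero lattice vector.
-/

open Matrix in
theorem Matrix.det_sub_one_eq_zero_of_mem_specialOrthogonalGroup_s7 {n R : Type*} [Fintype n]
    [DecidableEq n] [CommRing R] [NoZeroDivisors R] [CharZero R] {A : Matrix n n R}
    (hA : A ∈ specialOrthogonalGroup n R) (hn : Odd (Fintype.card n)) :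
    (A - 1).det = 0 := by
  obtain ⟨hAorth, hdet⟩ := mem_specialOrthogonalGroup_iff.mp hA
  have hAAt : A * Aᵀ = 1 := (mem_orthogonalGroup_iff n R).mp hAorth
  rw [← CharZero.eq_neg_self_iff]
  calc (A - 1).det = (A * (1 - Aᵀ)).det := by rw [mul_sub, mul_one, hAAt]
    _ = (1 - A)ᵀ.det := by rw [det_mul, hdet, one_mul, transpose_sub, transpose_one]
    _ = -(A - 1).det := by rw [det_transpose, ← neg_sub, det_neg, hn.neg_one_pow, neg_one_mul]

section LatticeInvariantMap

open Module Submodule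

variable {ι R S M : Type*} [Fintype ι] [DecidableEq ι] [CommRing R] [IsDomain R] [CommRing S]
  [Nontrivial S] [Algebra R S] [IsTorsionFree R S] [AddCommGroup M] [Module R M] [Module S M]
  [IsScalarTower R S M] (b : Basis ι S M) {f : M →ₗ[S] M}

theorem LinearMap.algebraMap_det_restrict_span
    (hf : ∀ v ∈ span R (Set.range b), f v ∈ span R (Set.range b)) :
    algebraMap R S ((f.restrictScalars R).restrict hf).det = f.det := by
  rw [← LinearMap.det_toMatrix (b.restrictScalars R), ← LinearMap.det_toMatrix b,
    RingHom.map_det]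
  congr 1
  ext i j
  rw [RingHom.mapMatrix_apply, Matrix.map_apply, LinearMap.toMatrix_apply, LinearMap.toMatrix_apply,
    Basis.restrictScalars_repr_apply]
  exact congrArg (fun x => b.repr (f x) i) (b.restrictScalars_apply R j)

theorem LinearMap.exists_mem_span_ne_zero_apply_eq_self
    (hf : ∀ v ∈ span R (Set.range b), f v ∈ span R (Set.range b)) (hdet : (f - 1).det = 0) :
    ∃ v ∈ span R (Set.range b), v ≠ 0 ∧ f v = v := by
  have hf1 : ∀ v ∈ span R (Set.range b), (f - 1) v ∈ span R (Set.range b) :=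
    fun v hv => sub_mem (hf v hv) hv
  have hdet_restrict : (((f - 1).restrictScalars R).restrict hf1).det = 0 := by
    apply FaithfulSMul.algebraMap_injective R S
    rw [LinearMap.algebraMap_det_restrict_span b hf1, hdet, map_zero]
  have : Free R (span R (Set.range b)) := .of_basis (b.restrictScalars R)
  obtain ⟨⟨v, hv⟩, hker, hv0⟩ :=
    exists_mem_ne_zero_of_ne_bot (LinearMap.bot_lt_ker_of_det_eq_zero hdet_restrict).ne'
  refine ⟨v, hv, by simpa using hv0, ?_⟩
  exact sub_eq_zero.mp (congrArg Subtype.val (LinearMap.mem_ker.mp hker))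

end LatticeInvariantMap

theorem axis_meets_lattice_general (L : AddSubgroup (Fin 3 → ℝ)) (hL : IsLattice L)
    (H : Subgroup (Matrix.orthogonalGroup (Fin 3) ℝ))
    (hHL : ∀ h ∈ H, (fun v => Matrix.mulVec ((h : Matrix (Fin 3) (Fin 3) ℝ)) v) ''
      (L : Set (Fin 3 → ℝ)) = (L : Set (Fin 3 → ℝ)))
    (h : Matrix.orthogonalGroup (Fin 3) ℝ) (hh : h ∈ H)
    (hdet : ((h : Matrix (Fin 3) (Fin 3) ℝ)).det = 1) :
    ∃ v : Fin 3 → ℝ, v ∈ L ∧ v ≠ 0 ∧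
      Matrix.mulVec ((h : Matrix (Fin 3) (Fin 3) ℝ)) v = v := by
  obtain ⟨b, hb⟩ := hL
  have hmem : ∀ v, v ∈ L ↔ v ∈ Submodule.span ℤ (Set.range b) := Set.ext_iff.mp hb
  have hmaps : ∀ v ∈ Submodule.span ℤ (Set.range b),
      Matrix.toLin' (h : Matrix (Fin 3) (Fin 3) ℝ) v ∈ Submodule.span ℤ (Set.range b) := by
    intro v hv
    rw [← hmem, ← SetLike.mem_coe, ← hHL h hh]
    exact ⟨v, (hmem v).mpr hv, rfl⟩
  have hfixed : (Matrix.toLin' (h : Matrix (Fin 3) (Fin 3) ℝ) - 1).det = 0 := by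
    rw [Module.End.one_eq_id, ← Matrix.toLin'_one, ← map_sub, LinearMap.det_toLin']
    exact Matrix.det_sub_one_eq_zero_of_mem_specialOrthogonalGroup_s7 ⟨h.prop, hdet⟩ (by decide)
  obtain ⟨v, hv, hv0, hfix⟩ := LinearMap.exists_mem_span_ne_zero_apply_eq_self b hmaps hfixed
  exact ⟨v, (hmem v).mpr hv, hv0, hfix⟩

/-- Let `H` be a point group acting on a lattice `L` in `ℝ³`, let
`h ∈ H ∩ SO(3)` with `h ≠ 1`, and let `ℓ = {v : h · v = v}` be the line fixed by `h`.
Then `ℓ` contains a non-zero element of `L`. -/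
theorem axis_meets_lattice (L : AddSubgroup (Fin 3 → ℝ)) (hL : IsLattice L)
    (H : Subgroup (Matrix.orthogonalGroup (Fin 3) ℝ))
    (hHL : ∀ h ∈ H, (fun v => Matrix.mulVec ((h : Matrix (Fin 3) (Fin 3) ℝ)) v) ''
      (L : Set (Fin 3 → ℝ)) = (L : Set (Fin 3 → ℝ)))
    (h : Matrix.orthogonalGroup (Fin 3) ℝ) (hh : h ∈ H)
    (hdet : ((h : Matrix (Fin 3) (Fin 3) ℝ)).det = 1) (hne : h ≠ 1) :
    ∃ v : Fin 3 → ℝ, v ∈ L ∧ v ≠ 0 ∧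
      Matrix.mulVec ((h : Matrix (Fin 3) (Fin 3) ℝ)) v = v :=
  axis_meets_lattice_general L hL H hHL h hh hdet
end

section
/- Let H be a point group acting on a lattice L in ℝ³, let h ∈ H ∩ SO(3) with h ≠ 1, and let ℓ = {v ∈ ℝ³ : h·v = v} be the line fixed by h. Then the plane P = {v ∈ ℝ³ : v ⊥ ℓ} (the orthogonal complement of ℓ) contains a non-zero element of L. -/
/-! Since `h ≠ 1`, it moves some basis vector `b` of the lattice, and `h b - b` is then a
non-zero lattice vector. It is orthogonal to every `w` fixed by `h`, because
`⟪h b, w⟫ = ⟪h b, h w⟫ = ⟪b, w⟫`. -/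

namespace Matrix

variable {n R : Type*} [Fintype n] [DecidableEq n] [CommRing R]

theorem transpose_mulVec_eq_self_of_mem_orthogonalGroup {A : Matrix n n R}
    (hA : A ∈ orthogonalGroup n R) {w : n → R} (hw : A *ᵥ w = w) : Aᵀ *ᵥ w = w := by
  conv_lhs => rw [← hw]
  rw [mulVec_mulVec, (mem_orthogonalGroup_iff' n R).mp hA, one_mulVec]

theorem mulVec_sub_self_dotProduct_eq_zero_of_mem_orthogonalGroup {A : Matrix n n R}
    (hA : A ∈ orthogonalGroup n R) {w : n → R} (hw : A *ᵥ w = w) (x : n → R) :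
    (A *ᵥ x - x) ⬝ᵥ w = 0 := by
  rw [sub_dotProduct, dotProduct_comm, dotProduct_mulVec, ← mulVec_transpose,
    transpose_mulVec_eq_self_of_mem_orthogonalGroup hA hw, dotProduct_comm, sub_self]

theorem exists_mulVec_basis_ne_of_ne_one {ι : Type*} (b : Module.Basis ι R (n → R))
    {A : Matrix n n R} (hA : A ≠ 1) : ∃ i, A *ᵥ b i ≠ b i := by
  by_contra! hfix
  refine hA (toLin'.injective (b.ext fun i => ?_))
  simp [hfix i]

end Matrix

theorem IsLattice.exists_basis_mem {L : AddSubgroup (Fin 3 → ℝ)} (hL : IsLattice L) :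
    ∃ b : Module.Basis (Fin 3) ℝ (Fin 3 → ℝ), ∀ i, b i ∈ L := by
  obtain ⟨b, hb⟩ := hL
  exact ⟨b, fun i => (Set.ext_iff.mp hb (b i)).mpr (Submodule.subset_span ⟨i, rfl⟩)⟩

theorem orthogonal_plane_meets_lattice_general (L : AddSubgroup (Fin 3 → ℝ)) (hL : IsLattice L)
    (H : Subgroup (Matrix.orthogonalGroup (Fin 3) ℝ))
    (hHL : ∀ h ∈ H, (fun v => Matrix.mulVec ((h : Matrix (Fin 3) (Fin 3) ℝ)) v) ''
      (L : Set (Fin 3 → ℝ)) = (L : Set (Fin 3 → ℝ)))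
    (h : Matrix.orthogonalGroup (Fin 3) ℝ) (hh : h ∈ H) (hne : h ≠ 1) :
    ∃ v : Fin 3 → ℝ, v ∈ L ∧ v ≠ 0 ∧
      ∀ w : Fin 3 → ℝ, Matrix.mulVec ((h : Matrix (Fin 3) (Fin 3) ℝ)) w = w →
        dotProduct v w = 0 := by
  obtain ⟨b, hbL⟩ := hL.exists_basis_mem
  obtain ⟨i, hi⟩ := Matrix.exists_mulVec_basis_ne_of_ne_one b (A := h)
    (fun h1 => hne (Subtype.ext h1))
  have hhb : Matrix.mulVec (h : Matrix (Fin 3) (Fin 3) ℝ) (b i) ∈ L := by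
    rw [← SetLike.mem_coe, ← hHL h hh]
    exact ⟨b i, hbL i, rfl⟩
  exact ⟨_, sub_mem hhb (hbL i), sub_ne_zero.mpr hi, fun w hw =>
    Matrix.mulVec_sub_self_dotProduct_eq_zero_of_mem_orthogonalGroup h.2 hw (b i)⟩

/-- Let `H` be a point group acting on a lattice `L` in `ℝ³`, let
`h ∈ H ∩ SO(3)` with `h ≠ 1`, and let `ℓ = {v : h · v = v}` be the line fixed by `h`.
Then the plane `P = {v : v ⊥ ℓ}` (the orthogonal complement of `ℓ`) contains a non-zero
element of `L`. -/
theorem orthogonal_plane_meets_lattice (L : AddSubgroup (Fin 3 → ℝ)) (hL : IsLattice L)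
    (H : Subgroup (Matrix.orthogonalGroup (Fin 3) ℝ))
    (hHL : ∀ h ∈ H, (fun v => Matrix.mulVec ((h : Matrix (Fin 3) (Fin 3) ℝ)) v) ''
      (L : Set (Fin 3 → ℝ)) = (L : Set (Fin 3 → ℝ)))
    (h : Matrix.orthogonalGroup (Fin 3) ℝ) (hh : h ∈ H)
    (hdet : ((h : Matrix (Fin 3) (Fin 3) ℝ)).det = 1) (hne : h ≠ 1) :
    ∃ v : Fin 3 → ℝ, v ∈ L ∧ v ≠ 0 ∧
      ∀ w : Fin 3 → ℝ, Matrix.mulVec ((h : Matrix (Fin 3) (Fin 3) ℝ)) w = w →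
        dotProduct v w = 0 :=
  orthogonal_plane_meets_lattice_general L hL H hHL h hh hne
end

section
/- Let H be a point group acting on a lattice L in ℝ³, and let h ∈ H be a reflection in a plane P, i.e. h is an orthogonal involution whose fixed subspace {v ∈ ℝ³ : h·v = v} equals the two-dimensional subspace P. Then the additive group L ∩ P is free abelian of rank two (isomorphic to ℤ²). -/
open Submodule (span span_span_of_tower span_mono map_span mem_map_of_mem smul_mem)
open Module (finrank finBasisOfFinrankEq)

namespace IsLattice

variable {L : AddSubgroup (Fin 3 → ℝ)}

theorem discreteTopology (hL : IsLattice L) : DiscreteTopology L.toIntSubmodule := by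
  obtain ⟨b, hb⟩ := hL
  have : L.toIntSubmodule = span ℤ (Set.range b) := SetLike.coe_injective hb
  rw [this]
  infer_instance

theorem span_real_eq_top (hL : IsLattice L) : span ℝ (L : Set (Fin 3 → ℝ)) = ⊤ := by
  obtain ⟨b, hb⟩ := hL
  rw [hb, span_span_of_tower, b.span_eq]

end IsLattice

section Involution

variable {E : Type*} [NormedAddCommGroup E] [NormedSpace ℝ E]

instance ZLattice.comap_subtype_discreteTopology (L : Submodule ℤ E) [DiscreteTopology L]
    (P : Submodule ℝ E) : DiscreteTopology (ZLattice.comap ℝ L P.subtype) :=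
  ZLattice.comap_discreteTopology ℝ L continuous_subtype_val Subtype.val_injective

theorem isZLattice_comap_fixed {L : Submodule ℤ E} [DiscreteTopology L]
    (hL : span ℝ (L : Set E) = ⊤) {T : E →ₗ[ℝ] E} (hT : T * T = 1) (hTL : ∀ x ∈ L, T x ∈ L)
    {P : Submodule ℝ E} (hP : ∀ v, v ∈ P ↔ T v = v) :
    IsZLattice ℝ (ZLattice.comap ℝ L P.subtype) := by
  refine ⟨?_⟩
  let S : E →ₗ[ℝ] P := (1 + T).codRestrict P fun v => (hP _).2 <| by
    rw [LinearMap.add_apply, map_add, Module.End.one_apply, ← Module.End.mul_apply, hT,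
      Module.End.one_apply, add_comm]
  have hSL : S '' L ⊆ ZLattice.comap ℝ L P.subtype := by
    rintro _ ⟨y, hy, rfl⟩
    exact L.add_mem hy (hTL y hy)
  have half_S : ∀ x : P, x = (2⁻¹ : ℝ) • S x := fun x => by
    ext
    simp [S, (hP x).1 x.2, ← two_smul ℝ (x : E), smul_smul]
  rw [eq_top_iff]
  rintro x -
  rw [half_S x]
  refine smul_mem _ _ (span_mono hSL ?_)
  rw [← map_span, hL]
  exact mem_map_of_mem trivial

end Involution

theorem ZLattice.nonempty_linearEquiv_fin {E : Type*} [NormedAddCommGroup E] [NormedSpace ℝ E]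
    [FiniteDimensional ℝ E] (N : Submodule ℤ E) [DiscreteTopology N] [IsZLattice ℝ N] {n : ℕ}
    (hn : finrank ℝ E = n) : Nonempty (N ≃ₗ[ℤ] (Fin n → ℤ)) :=
  have := ZLattice.module_free ℝ N
  have := ZLattice.module_finite ℝ N
  ⟨(finBasisOfFinrankEq ℤ N ((ZLattice.rank ℝ N).trans hn)).equivFun⟩

def AddSubgroup.infEquivComapSubtype {E : Type*} [NormedAddCommGroup E] [NormedSpace ℝ E]
    (L : AddSubgroup E) (P : Submodule ℝ E) :
    ↥(L ⊓ P.toAddSubgroup) ≃+ ZLattice.comap ℝ L.toIntSubmodule P.subtype where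
  toFun x := ⟨⟨x.1, x.2.2⟩, x.2.1⟩
  invFun x := ⟨x.1.1, x.2, x.1.2⟩
  left_inv _ := rfl
  right_inv _ := rfl
  map_add' _ _ := rfl

theorem reflection_plane_lattice_rank_two_general (L : AddSubgroup (Fin 3 → ℝ)) (hL : IsLattice L)
    (H : Subgroup (Matrix.orthogonalGroup (Fin 3) ℝ))
    (hHL : ∀ h ∈ H, (fun v => Matrix.mulVec ((h : Matrix (Fin 3) (Fin 3) ℝ)) v) ''
      (L : Set (Fin 3 → ℝ)) = (L : Set (Fin 3 → ℝ)))
    (h : Matrix.orthogonalGroup (Fin 3) ℝ) (hh : h ∈ H)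
    (hinv : h * h = 1)
    (P : Submodule ℝ (Fin 3 → ℝ)) (hP : Module.finrank ℝ P = 2)
    (hfix : {v : Fin 3 → ℝ | Matrix.mulVec ((h : Matrix (Fin 3) (Fin 3) ℝ)) v = v} =
      (P : Set (Fin 3 → ℝ))) :
    Nonempty (↥(L ⊓ P.toAddSubgroup) ≃+ ℤ × ℤ) := by
  set T := Matrix.mulVecLin (h : Matrix (Fin 3) (Fin 3) ℝ)
  have hT : T * T = 1 := by
    have hh2 : (h * h : Matrix (Fin 3) (Fin 3) ℝ) = 1 := congrArg Subtype.val hinv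
    rw [Module.End.mul_eq_comp, ← Matrix.mulVecLin_mul, hh2, Matrix.mulVecLin_one,
      Module.End.one_eq_id]
  have hTL : ∀ x ∈ L.toIntSubmodule, T x ∈ L.toIntSubmodule := fun x hx =>
    (hHL h hh).subset (Set.mem_image_of_mem _ hx)
  have hPT : ∀ v, v ∈ P ↔ T v = v := fun v => by
    rw [← SetLike.mem_coe, ← hfix]
    rfl
  have := hL.discreteTopology
  have := isZLattice_comap_fixed (L := L.toIntSubmodule) hL.span_real_eq_top hT hTL hPT
  obtain ⟨e⟩ :=
    ZLattice.nonempty_linearEquiv_fin (ZLattice.comap ℝ L.toIntSubmodule P.subtype) hP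
  exact ⟨(L.infEquivComapSubtype _).trans (e.trans (LinearEquiv.finTwoArrow ℤ ℤ)).toAddEquiv⟩

/-- Let `H` be a point group acting on a lattice `L` in `ℝ³`, and let
`h ∈ H` be a reflection in a plane `P`, i.e. `h` is an (orthogonal) involution whose
fixed subspace `{v : h · v = v}` equals the two-dimensional subspace `P`.  Then the
additive group `L ∩ P` is free abelian of rank two (isomorphic to `ℤ²`). -/
theorem reflection_plane_lattice_rank_two (L : AddSubgroup (Fin 3 → ℝ)) (hL : IsLattice L)
    (H : Subgroup (Matrix.orthogonalGroup (Fin 3) ℝ))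
    (hHL : ∀ h ∈ H, (fun v => Matrix.mulVec ((h : Matrix (Fin 3) (Fin 3) ℝ)) v) ''
      (L : Set (Fin 3 → ℝ)) = (L : Set (Fin 3 → ℝ)))
    (h : Matrix.orthogonalGroup (Fin 3) ℝ) (hh : h ∈ H)
    (hinv : h * h = 1) (hne : h ≠ 1)
    (P : Submodule ℝ (Fin 3 → ℝ)) (hP : Module.finrank ℝ P = 2)
    (hfix : {v : Fin 3 → ℝ | Matrix.mulVec ((h : Matrix (Fin 3) (Fin 3) ℝ)) v = v} =
      (P : Set (Fin 3 → ℝ))) :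
    Nonempty (↥(L ⊓ P.toAddSubgroup) ≃+ ℤ × ℤ) :=
  reflection_plane_lattice_rank_two_general L hL H hHL h hh hinv P hP hfix
end

section
/- Let v₁ = (1,1,1), v₂ = (1,−1,0), v₃ = (0,−1,1) and let L_P = ℤ·v₁ + ℤ·v₂ + ℤ·v₃ (the prismatic lattice). Let L be an additive subgroup of ℝ³ with L_P ⊆ L such that ℤ·v₁ is full in L (L ∩ ℝ·v₁ = ℤ·v₁) and ℤ·v₂ + ℤ·v₃ is full in L (L ∩ (ℝ·v₂ + ℝ·v₃) = ℤ·v₂ + ℤ·v₃). Suppose L is mapped onto itself both by the 120-degree rotation about the line x = y = z (the cyclic coordinate-permutation matrix) and by the reflection across the plane x + y + z = 0 (the matrix (1/3)·[[1,−2,−2],[−2,1,−2],[−2,−2,1]]). Then L = L_P. -/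
/-!
For `w ∈ L` put `s = w₀ + w₁ + w₂`. Summing the orbit of `w` under the rotation gives `s • v₁ ∈ L`,
and `w` minus its reflection is `(2s/3) • v₁ ∈ L`; fullness of `ℤ v₁` makes `s` and `2s/3`, hence
`s/3`, integers. Then `w - (s/3) • v₁` lies in the plane `x + y + z = 0`, where fullness of
`ℤ v₂ + ℤ v₃` makes its coefficients `w₀ - s/3`, `w₂ - s/3` along `v₂`, `v₃`
integers.
-/

open Matrix

local notation "v₁" => (![1, 1, 1] : Fin 3 → ℝ)
local notation "v₂" => (![1, -1, 0] : Fin 3 → ℝ)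
local notation "v₃" => (![0, -1, 1] : Fin 3 → ℝ)

lemma cyclicPerm_mulVec (w : Fin 3 → ℝ) :
    (!![0, 1, 0; 0, 0, 1; 1, 0, 0] : Matrix (Fin 3) (Fin 3) ℝ) *ᵥ w = ![w 1, w 2, w 0] := by
  ext i; fin_cases i <;> simp [mulVec, dotProduct, Fin.sum_univ_three]

lemma add_cyclicPerm_add_cyclicPerm (w : Fin 3 → ℝ) :
    w + ![w 1, w 2, w 0] + ![w 2, w 0, w 1] = (∑ i, w i) • v₁ := by
  ext i; fin_cases i <;> simp [Fin.sum_univ_three, vecHead, vecTail] <;> ring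

lemma reflection_mulVec (w : Fin 3 → ℝ) :
    ((1 / 3 : ℝ) • !![1, -2, -2; -2, 1, -2; -2, -2, 1] : Matrix (Fin 3) (Fin 3) ℝ) *ᵥ w =
      w - (2 / 3 * ∑ i, w i) • v₁ := by
  ext i; fin_cases i <;> simp [mulVec, dotProduct, Fin.sum_univ_three] <;> ring

lemma sub_smul_eq_smul_add_smul (w : Fin 3 → ℝ) :
    w - ((∑ i, w i) / 3) • v₁ =
      (w 0 - (∑ i, w i) / 3) • v₂ + (w 2 - (∑ i, w i) / 3) • v₃ := by
  ext i; fin_cases i <;> simp [Fin.sum_univ_three]; ring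

section Invariance

variable {L : AddSubgroup (Fin 3 → ℝ)} {w : Fin 3 → ℝ}

lemma sum_smul_mem_of_cyclicPerm_image_eq
    (hrot : (fun v => (!![0, 1, 0; 0, 0, 1; 1, 0, 0] : Matrix (Fin 3) (Fin 3) ℝ) *ᵥ v) ''
      (L : Set (Fin 3 → ℝ)) = L) (hw : w ∈ L) :
    (∑ i, w i) • v₁ ∈ L := by
  have hrot' : ∀ v ∈ L, ![v 1, v 2, v 0] ∈ L := fun v hv => by
    simpa only [cyclicPerm_mulVec, SetLike.mem_coe] using hrot.le (Set.mem_image_of_mem _ hv)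
  have hw₁ := hrot' w hw
  have hw₂ := hrot' _ hw₁
  rw [← add_cyclicPerm_add_cyclicPerm]
  exact L.add_mem (L.add_mem hw hw₁) hw₂

lemma two_thirds_sum_smul_mem_of_reflection_image_eq
    (hrefl : (fun v => ((1 / 3 : ℝ) • !![1, -2, -2; -2, 1, -2; -2, -2, 1] :
        Matrix (Fin 3) (Fin 3) ℝ) *ᵥ v) '' (L : Set (Fin 3 → ℝ)) = L) (hw : w ∈ L) :
    (2 / 3 * ∑ i, w i) • v₁ ∈ L := by
  have hRw : w - (2 / 3 * ∑ i, w i) • v₁ ∈ L := by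
    rw [← reflection_mulVec]; exact hrefl.le (Set.mem_image_of_mem _ hw)
  simpa only [sub_sub_cancel] using L.sub_mem hw hRw

end Invariance

lemma intCast_smul_add_smul_add_smul_mem_closure (k p q : ℤ) :
    (k : ℝ) • v₁ + ((p : ℝ) • v₂ + (q : ℝ) • v₃) ∈
      AddSubgroup.closure ({v₁, v₂, v₃} : Set (Fin 3 → ℝ)) := by
  simp only [Int.cast_smul_eq_zsmul]
  refine add_mem (zsmul_mem ?_ k) (add_mem (zsmul_mem ?_ p) (zsmul_mem ?_ q)) <;>
    exact AddSubgroup.subset_closure (by simp)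

/-- Let `v₁ = (1,1,1)`, `v₂ = (1,-1,0)`, `v₃ = (0,-1,1)` and let
`L_P = ℤ·v₁ + ℤ·v₂ + ℤ·v₃` (the prismatic lattice).  Let `L` be an additive subgroup of
`ℝ³` with `L_P ⊆ L` such that `ℤ·v₁` is full in `L` and `ℤ·v₂ + ℤ·v₃` is full in `L`.
If `L` is mapped onto itself both by the `120`-degree rotation about the line `x = y = z`
(the cyclic coordinate-permutation matrix) and by the reflection across the plane
`x + y + z = 0` (the matrix `(1/3)·[[1,-2,-2],[-2,1,-2],[-2,-2,1]]`), then `L = L_P`. -/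
theorem prismatic_lattice_rigidity (L : AddSubgroup (Fin 3 → ℝ))
    (hsub : AddSubgroup.closure
        ({![1, 1, 1], ![1, -1, 0], ![0, -1, 1]} : Set (Fin 3 → ℝ)) ≤ L)
    (hfull1 : ∀ c : ℝ, c • (![1, 1, 1] : Fin 3 → ℝ) ∈ L ↔ ∃ n : ℤ, c = n)
    (hfull23 : ∀ a b : ℝ,
      a • (![1, -1, 0] : Fin 3 → ℝ) + b • (![0, -1, 1] : Fin 3 → ℝ) ∈ L ↔
        (∃ m : ℤ, a = m) ∧ (∃ n : ℤ, b = n))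
    (hrot : (fun v => Matrix.mulVec
        (!![0, 1, 0; 0, 0, 1; 1, 0, 0] : Matrix (Fin 3) (Fin 3) ℝ) v) ''
      (L : Set (Fin 3 → ℝ)) = (L : Set (Fin 3 → ℝ)))
    (hrefl : (fun v => Matrix.mulVec
        ((1 / 3 : ℝ) • !![1, -2, -2; -2, 1, -2; -2, -2, 1] : Matrix (Fin 3) (Fin 3) ℝ) v) ''
      (L : Set (Fin 3 → ℝ)) = (L : Set (Fin 3 → ℝ))) :
    L = AddSubgroup.closure ({![1, 1, 1], ![1, -1, 0], ![0, -1, 1]} : Set (Fin 3 → ℝ)) := by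
  refine le_antisymm (fun w hw => ?_) hsub
  obtain ⟨n, hn⟩ := (hfull1 _).1 (sum_smul_mem_of_cyclicPerm_image_eq hrot hw)
  obtain ⟨m, hm⟩ := (hfull1 _).1 (two_thirds_sum_smul_mem_of_reflection_image_eq hrefl hw)
  have hk : (∑ i, w i) / 3 = ((n - m : ℤ) : ℝ) := by push_cast; linarith
  have hkv₁ : ((∑ i, w i) / 3) • v₁ ∈ L := by
    rw [hk, Int.cast_smul_eq_zsmul]
    exact zsmul_mem (hsub (AddSubgroup.subset_closure (by simp))) _
  have hplane := L.sub_mem hw hkv₁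
  rw [sub_smul_eq_smul_add_smul] at hplane
  obtain ⟨⟨p, hp⟩, ⟨q, hq⟩⟩ := (hfull23 _ _).1 hplane
  rw [← add_sub_cancel (((∑ i, w i) / 3) • v₁) w, sub_smul_eq_smul_add_smul, hp, hq, hk]
  exact intCast_smul_add_smul_add_smul_mem_closure _ _ _
end

section
/- Let L be an additive subgroup of ℝ³ with ℤ³ ⊆ L ⊆ (1/2)·ℤ³ such that for each coordinate index i the subgroup ℤ·eᵢ is full in L (that is, L ∩ ℝ·eᵢ = ℤ·eᵢ). Then L is equal to one of the following six subgroups: ℤ³; ℤ³ + ℤ·(1/2,1/2,1/2); ℤ³ + ℤ·(1/2,1/2,0); ℤ³ + ℤ·(1/2,0,1/2); ℤ³ + ℤ·(0,1/2,1/2); or ℤ·(1/2,1/2,0) + ℤ·(1/2,0,1/2) + ℤ·(0,1/2,1/2). -/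
/-! Modulo `ℤ³` every vector of `L` lies in `{0, 1/2}³`, so `L` is determined by which of these
eight vectors it contains. Fullness excludes the `eᵢ/2`. Of the remaining half-diagonals
`a = (½,½,0)`, `b = (½,0,½)`, `c = (0,½,½)`, `d = (½,½,½)`, any two of `a, b, c` give the third
(`a + b - e₁ = c`, …), and `d` excludes each of them (`d - a = e₃/2`, …). This leaves six
membership patterns, one for each of the six lattices. -/

lemma half_smul_notMem {E : Type*} [AddCommGroup E] [Module ℝ E] {L : AddSubgroup E} {v : E}
    (hfull : ∀ c : ℝ, c • v ∈ L ↔ ∃ n : ℤ, c = n) : (1 / 2 : ℝ) • v ∉ L := by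
  intro hv
  obtain ⟨n, hn⟩ := (hfull _).mp hv
  have : (2 * n : ℤ) = 1 := by exact_mod_cast (by linarith : (2 : ℝ) * n = 1)
  omega

abbrev cubicLattice : AddSubgroup (Fin 3 → ℝ) :=
  AddSubgroup.closure {![1, 0, 0], ![0, 1, 0], ![0, 0, 1]}

def halfCube : Set (Fin 3 → ℝ) := {h | ∀ i, h i = 0 ∨ h i = 1 / 2}

lemma halfCube_subset : halfCube ⊆ {0, ![1/2, 0, 0], ![0, 1/2, 0], ![0, 0, 1/2],
    ![1/2, 1/2, 0], ![1/2, 0, 1/2], ![0, 1/2, 1/2], ![1/2, 1/2, 1/2]} := by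
  intro h hh
  have hvec : h = ![h 0, h 1, h 2] := by ext i; fin_cases i <;> rfl
  rw [hvec]
  rcases hh 0 with h0 | h0 <;> rcases hh 1 with h1 | h1 <;> rcases hh 2 with h2 | h2 <;>
    simp [h0, h1, h2]

lemma mem_cubicLattice_of_forall_int {v : Fin 3 → ℝ} (hv : ∀ i, ∃ n : ℤ, v i = n) :
    v ∈ cubicLattice := by
  choose n hn using hv
  have hsum : v = n 0 • ![1, 0, 0] + n 1 • ![0, 1, 0] + n 2 • ![0, 0, 1] := by
    ext i; fin_cases i <;> simp [hn]
  rw [hsum]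
  refine add_mem (add_mem ?_ ?_) ?_ <;> exact zsmul_mem (AddSubgroup.subset_closure (by simp)) _

lemma exists_int_sub_eq_zero_or_half {x : ℝ} (hx : ∃ n : ℤ, 2 * x = n) :
    ∃ m : ℤ, x - m = 0 ∨ x - m = 1 / 2 := by
  obtain ⟨n, hn⟩ := hx
  rcases Int.even_or_odd' n with ⟨m, rfl | rfl⟩
  · exact ⟨m, Or.inl (by push_cast at hn; linarith)⟩
  · exact ⟨m, Or.inr (by push_cast at hn; linarith)⟩

lemma exists_mem_halfCube_sub_mem_cubicLattice {v : Fin 3 → ℝ}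
    (hv : ∀ i, ∃ n : ℤ, 2 * v i = n) : ∃ h ∈ halfCube, v - h ∈ cubicLattice := by
  choose m hm using fun i => exists_int_sub_eq_zero_or_half (hv i)
  refine ⟨v - fun i => (m i : ℝ), hm, mem_cubicLattice_of_forall_int fun i => ⟨m i, ?_⟩⟩
  simp

lemma eq_closure_of_halfCube_inter_subset {L : AddSubgroup (Fin 3 → ℝ)} {S : Set (Fin 3 → ℝ)}
    (hZL : cubicLattice ≤ L) (hhalf : ∀ v ∈ L, ∀ i, ∃ n : ℤ, 2 * v i = n)
    (hZS : cubicLattice ≤ AddSubgroup.closure S) (hSL : S ⊆ L)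
    (hLS : halfCube ∩ L ⊆ AddSubgroup.closure S) : L = AddSubgroup.closure S := by
  refine le_antisymm (fun v hv => ?_) ((AddSubgroup.closure_le _).mpr hSL)
  obtain ⟨h, hh, hvh⟩ := exists_mem_halfCube_sub_mem_cubicLattice (hhalf v hv)
  have hhL : h ∈ L := by simpa using sub_mem hv (hZL hvh)
  simpa using add_mem (hZS hvh) (hLS ⟨hh, hhL⟩)

lemma halfCube_inter_subset {L M : AddSubgroup (Fin 3 → ℝ)}
    (ha₁ : ![1/2, 0, 0] ∉ L) (ha₂ : ![0, 1/2, 0] ∉ L) (ha₃ : ![0, 0, 1/2] ∉ L)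
    (hA : ![1/2, 1/2, 0] ∈ L → ![1/2, 1/2, 0] ∈ M) (hB : ![1/2, 0, 1/2] ∈ L → ![1/2, 0, 1/2] ∈ M)
    (hC : ![0, 1/2, 1/2] ∈ L → ![0, 1/2, 1/2] ∈ M)
    (hD : ![1/2, 1/2, 1/2] ∈ L → ![1/2, 1/2, 1/2] ∈ M) : halfCube ∩ L ⊆ M := by
  rintro h ⟨hh, hL⟩
  rcases halfCube_subset hh with rfl | rfl | rfl | rfl | rfl | rfl | rfl | rfl
  exacts [zero_mem M, absurd hL ha₁, absurd hL ha₂, absurd hL ha₃, hA hL, hB hL, hC hL, hD hL]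

lemma cubicLattice_le_closure_fcc : cubicLattice ≤
    AddSubgroup.closure ({![1/2, 1/2, 0], ![1/2, 0, 1/2], ![0, 1/2, 1/2]} : Set (Fin 3 → ℝ)) := by
  set F := AddSubgroup.closure ({![1/2, 1/2, 0], ![1/2, 0, 1/2], ![0, 1/2, 1/2]} : Set (Fin 3 → ℝ))
  have hA : ![1/2, 1/2, 0] ∈ F := AddSubgroup.subset_closure (by simp)
  have hB : ![1/2, 0, 1/2] ∈ F := AddSubgroup.subset_closure (by simp)
  have hC : ![0, 1/2, 1/2] ∈ F := AddSubgroup.subset_closure (by simp)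
  simp only [AddSubgroup.closure_le, Set.insert_subset_iff, Set.singleton_subset_iff,
    SetLike.mem_coe]
  refine ⟨?_, ?_, ?_⟩
  · convert sub_mem (add_mem hA hB) hC using 1; ext i; fin_cases i <;> norm_num
  · convert sub_mem (add_mem hA hC) hB using 1; ext i; fin_cases i <;> norm_num
  · convert sub_mem (add_mem hB hC) hA using 1; ext i; fin_cases i <;> norm_num

lemma half_diagonals_mem_cases {L : AddSubgroup (Fin 3 → ℝ)}
    (he₁ : ![1, 0, 0] ∈ L) (he₂ : ![0, 1, 0] ∈ L) (he₃ : ![0, 0, 1] ∈ L)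
    (ha₁ : ![1/2, 0, 0] ∉ L) (ha₂ : ![0, 1/2, 0] ∉ L) (ha₃ : ![0, 0, 1/2] ∉ L) :
    (![1/2, 1/2, 0] ∉ L ∧ ![1/2, 0, 1/2] ∉ L ∧ ![0, 1/2, 1/2] ∉ L ∧ ![1/2, 1/2, 1/2] ∉ L) ∨
    (![1/2, 1/2, 0] ∉ L ∧ ![1/2, 0, 1/2] ∉ L ∧ ![0, 1/2, 1/2] ∉ L ∧ ![1/2, 1/2, 1/2] ∈ L) ∨
    (![1/2, 1/2, 0] ∈ L ∧ ![1/2, 0, 1/2] ∉ L ∧ ![0, 1/2, 1/2] ∉ L ∧ ![1/2, 1/2, 1/2] ∉ L) ∨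
    (![1/2, 1/2, 0] ∉ L ∧ ![1/2, 0, 1/2] ∈ L ∧ ![0, 1/2, 1/2] ∉ L ∧ ![1/2, 1/2, 1/2] ∉ L) ∨
    (![1/2, 1/2, 0] ∉ L ∧ ![1/2, 0, 1/2] ∉ L ∧ ![0, 1/2, 1/2] ∈ L ∧ ![1/2, 1/2, 1/2] ∉ L) ∨
    (![1/2, 1/2, 0] ∈ L ∧ ![1/2, 0, 1/2] ∈ L ∧ ![0, 1/2, 1/2] ∈ L ∧ ![1/2, 1/2, 1/2] ∉ L) := by
  have hABC (hA : ![1/2, 1/2, 0] ∈ L) (hB : ![1/2, 0, 1/2] ∈ L) : ![0, 1/2, 1/2] ∈ L := by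
    convert sub_mem (add_mem hA hB) he₁ using 1; ext i; fin_cases i <;> norm_num
  have hACB (hA : ![1/2, 1/2, 0] ∈ L) (hC : ![0, 1/2, 1/2] ∈ L) : ![1/2, 0, 1/2] ∈ L := by
    convert sub_mem (add_mem hA hC) he₂ using 1; ext i; fin_cases i <;> norm_num
  have hBCA (hB : ![1/2, 0, 1/2] ∈ L) (hC : ![0, 1/2, 1/2] ∈ L) : ![1/2, 1/2, 0] ∈ L := by
    convert sub_mem (add_mem hB hC) he₃ using 1; ext i; fin_cases i <;> norm_num
  have hAD (hA : ![1/2, 1/2, 0] ∈ L) (hD : ![1/2, 1/2, 1/2] ∈ L) : False := ha₃ <| by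
    convert sub_mem hD hA using 1; ext i; fin_cases i <;> norm_num
  have hBD (hB : ![1/2, 0, 1/2] ∈ L) (hD : ![1/2, 1/2, 1/2] ∈ L) : False := ha₂ <| by
    convert sub_mem hD hB using 1; ext i; fin_cases i <;> norm_num
  have hCD (hC : ![0, 1/2, 1/2] ∈ L) (hD : ![1/2, 1/2, 1/2] ∈ L) : False := ha₁ <| by
    convert sub_mem hD hC using 1; ext i; fin_cases i <;> norm_num
  by_cases hD : ![1/2, 1/2, 1/2] ∈ L
  · exact Or.inr <| Or.inl ⟨fun hA => hAD hA hD, fun hB => hBD hB hD, fun hC => hCD hC hD, hD⟩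
  by_cases hA : ![1/2, 1/2, 0] ∈ L <;> by_cases hB : ![1/2, 0, 1/2] ∈ L <;>
    by_cases hC : ![0, 1/2, 1/2] ∈ L <;> simp_all

/-- Let `L` be an additive subgroup of `ℝ³` with
`ℤ³ ⊆ L ⊆ (1/2)·ℤ³` such that for each coordinate index `i` the subgroup `ℤ·eᵢ` is full
in `L` (that is, `L ∩ ℝ·eᵢ = ℤ·eᵢ`).  Then `L` equals one of the following six
subgroups: `ℤ³`; `ℤ³ + ℤ·(1/2,1/2,1/2)`; `ℤ³ + ℤ·(1/2,1/2,0)`; `ℤ³ + ℤ·(1/2,0,1/2)`;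
`ℤ³ + ℤ·(0,1/2,1/2)`; or `ℤ·(1/2,1/2,0) + ℤ·(1/2,0,1/2) + ℤ·(0,1/2,1/2)`. -/
theorem lattice_between_cubic_and_half_cubic (L : AddSubgroup (Fin 3 → ℝ))
    (hZ3 : AddSubgroup.closure
        ({![1, 0, 0], ![0, 1, 0], ![0, 0, 1]} : Set (Fin 3 → ℝ)) ≤ L)
    (hhalf : ∀ v ∈ L, ∀ i : Fin 3, ∃ n : ℤ, 2 * v i = n)
    (hfull1 : ∀ c : ℝ, c • (![1, 0, 0] : Fin 3 → ℝ) ∈ L ↔ ∃ n : ℤ, c = n)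
    (hfull2 : ∀ c : ℝ, c • (![0, 1, 0] : Fin 3 → ℝ) ∈ L ↔ ∃ n : ℤ, c = n)
    (hfull3 : ∀ c : ℝ, c • (![0, 0, 1] : Fin 3 → ℝ) ∈ L ↔ ∃ n : ℤ, c = n) :
    L = AddSubgroup.closure ({![1, 0, 0], ![0, 1, 0], ![0, 0, 1]} : Set (Fin 3 → ℝ)) ∨
    L = AddSubgroup.closure
      ({![1, 0, 0], ![0, 1, 0], ![0, 0, 1], ![1/2, 1/2, 1/2]} : Set (Fin 3 → ℝ)) ∨
    L = AddSubgroup.closure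
      ({![1, 0, 0], ![0, 1, 0], ![0, 0, 1], ![1/2, 1/2, 0]} : Set (Fin 3 → ℝ)) ∨
    L = AddSubgroup.closure
      ({![1, 0, 0], ![0, 1, 0], ![0, 0, 1], ![1/2, 0, 1/2]} : Set (Fin 3 → ℝ)) ∨
    L = AddSubgroup.closure
      ({![1, 0, 0], ![0, 1, 0], ![0, 0, 1], ![0, 1/2, 1/2]} : Set (Fin 3 → ℝ)) ∨
    L = AddSubgroup.closure
      ({![1/2, 1/2, 0], ![1/2, 0, 1/2], ![0, 1/2, 1/2]} : Set (Fin 3 → ℝ)) := by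
  have he₁ : ![1, 0, 0] ∈ L := hZ3 (AddSubgroup.subset_closure (by simp))
  have he₂ : ![0, 1, 0] ∈ L := hZ3 (AddSubgroup.subset_closure (by simp))
  have he₃ : ![0, 0, 1] ∈ L := hZ3 (AddSubgroup.subset_closure (by simp))
  have ha₁ : ![1/2, 0, 0] ∉ L := by simpa using half_smul_notMem hfull1
  have ha₂ : ![0, 1/2, 0] ∉ L := by simpa using half_smul_notMem hfull2
  have ha₃ : ![0, 0, 1/2] ∉ L := by simpa using half_smul_notMem hfull3
  -- the `k`-th pattern of `half_diagonals_mem_cases` yields the `k`-th lattice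
  refine (half_diagonals_mem_cases he₁ he₂ he₃ ha₁ ha₂ ha₃).imp ?_
    (.imp ?_ (.imp ?_ (.imp ?_ (.imp ?_ ?_)))) <;>
    rintro ⟨hA, hB, hC, hD⟩ <;>
    refine eq_closure_of_halfCube_inter_subset hZ3 hhalf ?_
      (by simp only [Set.insert_subset_iff, Set.singleton_subset_iff, SetLike.mem_coe, *, and_self])
      (halfCube_inter_subset ha₁ ha₂ ha₃ ?_ ?_ ?_ ?_) <;>
    first
    | exact cubicLattice_le_closure_fcc
    | exact AddSubgroup.closure_mono (by simp [Set.insert_subset_iff])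
    | exact fun h => absurd h ‹_›
    | exact fun _ => AddSubgroup.subset_closure (by simp)
end

section
/- Let W denote the group of 3×3 signed permutation matrices, let H ≤ W, let L be a lattice in ℝ³ with H·L = L, and let Γ = Γ(L,H). If v ∈ ℝ³ satisfies 2v ∉ L, then the stabilizer Γ_v = {γ ∈ Γ : γ(v) = v} is isomorphic to a subgroup of the symmetric group S₄ on four symbols (in particular, −I ∉ π(Γ_v)). -/
/-- A *signed permutation matrix*: a `3 × 3` matrix having exactly one nonzero entry,
equal to `±1`, in each row and each column. -/
def IsSignedPerm (A : Matrix (Fin 3) (Fin 3) ℝ) : Prop :=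
  ∃ (σ : Equiv.Perm (Fin 3)) (ε : Fin 3 → ℝ), (∀ i, ε i = 1 ∨ ε i = -1) ∧
    ∀ i j, A i j = if j = σ i then ε i else 0

private lemma memL' {L : AddSubgroup (Fin 3 → ℝ)} {H : Subgroup (Matrix.orthogonalGroup (Fin 3) ℝ)}
    (hHL : ∀ h ∈ H, (fun v => Matrix.mulVec ((h : Matrix (Fin 3) (Fin 3) ℝ)) v) ''
      (L : Set (Fin 3 → ℝ)) = (L : Set (Fin 3 → ℝ)))
    {h : Matrix.orthogonalGroup (Fin 3) ℝ} (hh : h ∈ H) {t : Fin 3 → ℝ} (ht : t ∈ L) :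
    Matrix.mulVec ((h : Matrix (Fin 3) (Fin 3) ℝ)) t ∈ L := by
  have hmem : Matrix.mulVec ((h : Matrix (Fin 3) (Fin 3) ℝ)) t ∈
      (fun v => Matrix.mulVec ((h : Matrix (Fin 3) (Fin 3) ℝ)) v) '' (L : Set (Fin 3 → ℝ)) :=
    ⟨t, ht, rfl⟩
  rw [hHL h hh] at hmem
  exact hmem

/-- The split crystallographic group `Γ(L,H)`: the group of isometries of `ℝ³` of the
form `x ↦ t + h·x` with `t ∈ L` and `h ∈ H`, viewed as a group of bijections of `ℝ³`. -/
def SplitCrys (L : AddSubgroup (Fin 3 → ℝ)) (H : Subgroup (Matrix.orthogonalGroup (Fin 3) ℝ))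
    (hHL : ∀ h ∈ H, (fun v => Matrix.mulVec ((h : Matrix (Fin 3) (Fin 3) ℝ)) v) ''
      (L : Set (Fin 3 → ℝ)) = (L : Set (Fin 3 → ℝ))) :
    Subgroup (Equiv.Perm (Fin 3 → ℝ)) where
  carrier := {f | ∃ t ∈ L, ∃ h ∈ H,
    ∀ x, f x = t + Matrix.mulVec ((h : Matrix (Fin 3) (Fin 3) ℝ)) x}
  one_mem' := ⟨0, L.zero_mem, 1, H.one_mem, fun x => by simp⟩
  mul_mem' := by
    rintro f g ⟨t₁, ht₁, h₁, hh₁, hf⟩ ⟨t₂, ht₂, h₂, hh₂, hg⟩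
    refine ⟨t₁ + Matrix.mulVec ((h₁ : Matrix (Fin 3) (Fin 3) ℝ)) t₂,
      L.add_mem ht₁ (memL' hHL hh₁ ht₂), h₁ * h₂, H.mul_mem hh₁ hh₂, fun x => ?_⟩
    rw [Equiv.Perm.mul_apply, hg, hf, Matrix.mulVec_add, Matrix.mulVec_mulVec,
      Submonoid.coe_mul, add_assoc]
  inv_mem' := by
    rintro f ⟨t, ht, h, hh, hf⟩
    refine ⟨-(Matrix.mulVec (((h⁻¹ : Matrix.orthogonalGroup (Fin 3) ℝ) : Matrix (Fin 3) (Fin 3) ℝ)) t),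
      L.neg_mem (memL' hHL (H.inv_mem hh) ht), h⁻¹, H.inv_mem hh, fun x => ?_⟩
    have hco : (h : Matrix (Fin 3) (Fin 3) ℝ) *
        ((h⁻¹ : Matrix.orthogonalGroup (Fin 3) ℝ) : Matrix (Fin 3) (Fin 3) ℝ) = 1 := by
      rw [← Submonoid.coe_mul, mul_inv_cancel, OneMemClass.coe_one]
    have hsymm : (f⁻¹ : Equiv.Perm (Fin 3 → ℝ)) x = f.symm x := rfl
    rw [hsymm, Equiv.symm_apply_eq, hf, Matrix.mulVec_add, Matrix.mulVec_neg,
      Matrix.mulVec_mulVec, Matrix.mulVec_mulVec, hco, Matrix.one_mulVec, Matrix.one_mulVec]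
    abel

/-! Every element of the stabilizer fixes `v` and acts around `v` by a signed permutation matrix,
so it permutes the four diagonals of the cube `v + {±1}³`. A linear map preserving each of the
four diagonals is a scalar, so the only nontrivial element that can act trivially on them is the
point reflection at `v`; its translation part would be `2v ∈ L`. -/

open scoped Pointwise Matrix

def cubeVertices : Set (Fin 3 → ℝ) := {x | ∀ i, x i = 1 ∨ x i = -1}

def cubeDiagonal : Fin 4 → Fin 3 → ℝ := ![![1, 1, 1], ![1, 1, -1], ![1, -1, 1], ![-1, 1, 1]]

lemma cubeDiagonal_mem_cubeVertices (j : Fin 4) : cubeDiagonal j ∈ cubeVertices := by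
  intro i
  fin_cases j <;> fin_cases i <;> simp [cubeDiagonal]

lemma exists_eq_cubeDiagonal_or_eq_neg {x : Fin 3 → ℝ} (hx : x ∈ cubeVertices) :
    ∃ j, x = cubeDiagonal j ∨ x = -cubeDiagonal j := by
  have hx' : x = ![x 0, x 1, x 2] := by ext i; fin_cases i <;> rfl
  rcases hx 0 with h0 | h0 <;> rcases hx 1 with h1 | h1 <;> rcases hx 2 with h2 | h2 <;>
    rw [hx', h0, h1, h2]
  · exact ⟨0, .inl rfl⟩
  · exact ⟨1, .inl rfl⟩
  · exact ⟨2, .inl rfl⟩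
  · exact ⟨3, .inr (by simp [cubeDiagonal])⟩
  · exact ⟨3, .inl rfl⟩
  · exact ⟨2, .inr (by simp [cubeDiagonal])⟩
  · exact ⟨1, .inr (by simp [cubeDiagonal])⟩
  · exact ⟨0, .inr (by simp [cubeDiagonal])⟩

lemma IsSignedPerm.mulVec_mem_cubeVertices {A : Matrix (Fin 3) (Fin 3) ℝ} (hA : IsSignedPerm A)
    {x : Fin 3 → ℝ} (hx : x ∈ cubeVertices) : A *ᵥ x ∈ cubeVertices := by
  obtain ⟨σ, ε, hε, hA⟩ := hA
  intro i
  have hAx : (A *ᵥ x) i = ε i * x (σ i) := by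
    simp [Matrix.mulVec, dotProduct, hA]
  rw [hAx]
  rcases hε i with h | h <;> rcases hx (σ i) with h' | h' <;> simp [h, h']

/-- The four diagonals of the cube form a projective frame of `ℝ³`: the first is the sum of the
other three, which are linearly independent. -/
lemma Matrix.eq_smul_one_of_mulVec_cubeDiagonal {A : Matrix (Fin 3) (Fin 3) ℝ} {s : Fin 4 → ℝ}
    (h : ∀ j, A *ᵥ cubeDiagonal j = s j • cubeDiagonal j) : A = s 0 • 1 := by
  have hsum : s 0 • cubeDiagonal 0 =
      s 1 • cubeDiagonal 1 + s 2 • cubeDiagonal 2 + s 3 • cubeDiagonal 3 := by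
    rw [← h, ← h, ← h, ← h, ← Matrix.mulVec_add, ← Matrix.mulVec_add]
    congr 1
    ext i; fin_cases i <;> simp [cubeDiagonal]
  have c0 := congrFun hsum 0
  have c1 := congrFun hsum 1
  have c2 := congrFun hsum 2
  simp only [cubeDiagonal, Pi.add_apply, Pi.smul_apply, smul_eq_mul, Matrix.cons_val, mul_one,
    mul_neg] at c0 c1 c2
  ext i k
  have e0 := congrFun (h 0) i
  have e1 := congrFun (h 1) i
  have e2 := congrFun (h 2) i
  have e3 := congrFun (h 3) i
  simp only [cubeDiagonal, Matrix.mulVec, dotProduct, Fin.sum_univ_three, Pi.smul_apply,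
    smul_eq_mul] at e0 e1 e2 e3
  fin_cases i <;> fin_cases k <;> simp at e0 e1 e2 e3 ⊢ <;> linarith

lemma Matrix.eq_one_or_eq_neg_one_of_mulVec_cubeDiagonal {A : Matrix (Fin 3) (Fin 3) ℝ}
    (h : ∀ j, A *ᵥ cubeDiagonal j = cubeDiagonal j ∨ A *ᵥ cubeDiagonal j = -cubeDiagonal j) :
    A = 1 ∨ A = -1 := by
  have hs : ∀ j, ∃ c : ℝ, (c = 1 ∨ c = -1) ∧ A *ᵥ cubeDiagonal j = c • cubeDiagonal j :=
    fun j => (h j).elim (fun hj => ⟨1, .inl rfl, by rw [hj, one_smul]⟩)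
      (fun hj => ⟨-1, .inr rfl, by rw [hj, neg_one_smul]⟩)
  choose s hs_sign hs using hs
  rw [Matrix.eq_smul_one_of_mulVec_cubeDiagonal hs]
  rcases hs_sign 0 with h0 | h0 <;> simp [h0]

/-- Each diagonal of the cube `v + {±1}³` is recorded as the pair of its endpoints. -/
def diagonalsThrough (v : Fin 3 → ℝ) : Set (Set (Fin 3 → ℝ)) :=
  Set.range fun j => {v + cubeDiagonal j, v - cubeDiagonal j}

def IsSignedPermAround (v : Fin 3 → ℝ) (f : Equiv.Perm (Fin 3 → ℝ)) : Prop :=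
  ∃ A, IsSignedPerm A ∧ ∀ x, f (v + x) = v + A *ᵥ x

lemma Equiv.Perm.smul_pair_add_sub_eq {v : Fin 3 → ℝ} {f : Equiv.Perm (Fin 3 → ℝ)}
    {A : Matrix (Fin 3) (Fin 3) ℝ} (hf : ∀ x, f (v + x) = v + A *ᵥ x) (x : Fin 3 → ℝ) :
    f • ({v + x, v - x} : Set (Fin 3 → ℝ)) = {v + A *ᵥ x, v - A *ᵥ x} := by
  rw [Set.smul_set_insert, Set.smul_set_singleton, Equiv.Perm.smul_def, Equiv.Perm.smul_def, hf,
    sub_eq_add_neg, hf, Matrix.mulVec_neg, ← sub_eq_add_neg]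

lemma eq_or_eq_neg_of_pair_eq_pair {G : Type*} [AddGroup G] {v x y : G}
    (h : ({v + y, v - y} : Set G) = {v + x, v - x}) : y = x ∨ y = -x := by
  rcases Set.pair_eq_pair_iff.mp h with ⟨h1, -⟩ | ⟨h1, -⟩
  · exact .inl (add_left_cancel h1)
  · exact .inr (by rw [sub_eq_add_neg] at h1; exact add_left_cancel h1)

section DiagonalAction

variable {v : Fin 3 → ℝ} {K : Subgroup (Equiv.Perm (Fin 3 → ℝ))}

def diagonalsSubMulAction (hK : ∀ f ∈ K, IsSignedPermAround v f) :
    SubMulAction K (Set (Fin 3 → ℝ)) where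
  carrier := diagonalsThrough v
  smul_mem' := by
    rintro f _ ⟨j, rfl⟩
    obtain ⟨A, hA, hf⟩ := hK f f.2
    obtain ⟨k, hk⟩ := exists_eq_cubeDiagonal_or_eq_neg
      (hA.mulVec_mem_cubeVertices (cubeDiagonal_mem_cubeVertices j))
    refine ⟨k, ?_⟩
    change _ = (f : Equiv.Perm (Fin 3 → ℝ)) • ({v + _, v - _} : Set (Fin 3 → ℝ))
    rw [Equiv.Perm.smul_pair_add_sub_eq hf]
    rcases hk with hk | hk
    · rw [hk]
    · rw [hk, sub_neg_eq_add, ← sub_eq_add_neg, Set.pair_comm]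

lemma eq_one_or_eq_pointReflection_of_smul_diagonal_eq (hK : ∀ f ∈ K, IsSignedPermAround v f)
    (f : K) (h : ∀ D ∈ diagonalsThrough v, f • D = D) :
    f = 1 ∨ (f : Equiv.Perm (Fin 3 → ℝ)) = Equiv.pointReflection v := by
  obtain ⟨A, -, hf⟩ := hK f f.2
  have hA : ∀ j, A *ᵥ cubeDiagonal j = cubeDiagonal j ∨ A *ᵥ cubeDiagonal j = -cubeDiagonal j :=
    fun j => eq_or_eq_neg_of_pair_eq_pair
      ((Equiv.Perm.smul_pair_add_sub_eq hf _).symm.trans (h _ ⟨j, rfl⟩))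
  rcases Matrix.eq_one_or_eq_neg_one_of_mulVec_cubeDiagonal hA with rfl | rfl
  · left
    ext x : 2
    simpa using hf (x - v)
  · right
    ext x : 1
    have hx := hf (x - v)
    rw [add_sub_cancel, Matrix.neg_mulVec, Matrix.one_mulVec] at hx
    rw [hx, Equiv.pointReflection_apply, vsub_eq_sub, vadd_eq_add]
    abel

noncomputable def diagonalPermHom (hK : ∀ f ∈ K, IsSignedPermAround v f) :
    K →* Equiv.Perm (Fin 4) :=
  (Equiv.Perm.viaEmbeddingHom ⟨Set.rangeSplitting _, Set.rangeSplitting_injective _⟩).comp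
    (MulAction.toPermHom K (diagonalsSubMulAction hK))

lemma diagonalPermHom_injective (hK : ∀ f ∈ K, IsSignedPermAround v f)
    (hv : Equiv.pointReflection v ∉ K) : Function.Injective (diagonalPermHom hK) := by
  rw [injective_iff_map_eq_one]
  intro f hf
  have hfix : ∀ D ∈ diagonalsThrough v, f • D = D := fun D hD =>
    congrArg Subtype.val (Equiv.ext_iff.mp
      (Equiv.Perm.viaEmbeddingHom_injective _ (hf.trans (map_one _).symm)) ⟨D, hD⟩)
  refine (eq_one_or_eq_pointReflection_of_smul_diagonal_eq hK f hfix).resolve_right ?_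
  intro h
  exact hv (h ▸ f.2)

end DiagonalAction

section SplitCrys

variable {L : AddSubgroup (Fin 3 → ℝ)} {H : Subgroup (Matrix.orthogonalGroup (Fin 3) ℝ)}
  {hHL : ∀ h ∈ H, (fun v => Matrix.mulVec ((h : Matrix (Fin 3) (Fin 3) ℝ)) v) ''
      (L : Set (Fin 3 → ℝ)) = (L : Set (Fin 3 → ℝ))}
  {f : Equiv.Perm (Fin 3 → ℝ)}

lemma SplitCrys.apply_zero_mem (hf : f ∈ SplitCrys L H hHL) : f 0 ∈ L := by
  obtain ⟨t, ht, h, -, hf⟩ := hf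
  rwa [hf, Matrix.mulVec_zero, add_zero]

lemma SplitCrys.isSignedPermAround (hW : ∀ h ∈ H, IsSignedPerm (h : Matrix (Fin 3) (Fin 3) ℝ))
    (hf : f ∈ SplitCrys L H hHL) {v : Fin 3 → ℝ} (hfv : f v = v) : IsSignedPermAround v f := by
  obtain ⟨t, -, h, hh, hf⟩ := hf
  refine ⟨h, hW h hh, fun x => ?_⟩
  rw [hf, Matrix.mulVec_add, ← add_assoc, ← hf, hfv]

end SplitCrys

theorem stabilizer_embeds_in_S4_general (L : AddSubgroup (Fin 3 → ℝ))
    (H : Subgroup (Matrix.orthogonalGroup (Fin 3) ℝ))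
    (hW : ∀ h ∈ H, IsSignedPerm ((h : Matrix (Fin 3) (Fin 3) ℝ)))
    (hHL : ∀ h ∈ H, (fun v => Matrix.mulVec ((h : Matrix (Fin 3) (Fin 3) ℝ)) v) ''
      (L : Set (Fin 3 → ℝ)) = (L : Set (Fin 3 → ℝ)))
    (v : Fin 3 → ℝ) (hv : (2 : ℝ) • v ∉ L) :
    (∃ φ : ↥(SplitCrys L H hHL ⊓ MulAction.stabilizer (Equiv.Perm (Fin 3 → ℝ)) v) →*
        Equiv.Perm (Fin 4), Function.Injective φ) ∧
    ¬ ∃ f : Equiv.Perm (Fin 3 → ℝ), f ∈ SplitCrys L H hHL ∧ f v = v ∧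
        ∀ x, f x - f 0 = -x := by
  have hK : ∀ f ∈ SplitCrys L H hHL ⊓ MulAction.stabilizer (Equiv.Perm (Fin 3 → ℝ)) v,
      IsSignedPermAround v f := fun f hf => SplitCrys.isSignedPermAround hW hf.1 hf.2
  refine ⟨⟨diagonalPermHom hK, diagonalPermHom_injective hK fun hmem => hv ?_⟩, ?_⟩
  · have h0 := SplitCrys.apply_zero_mem hmem.1
    rwa [Equiv.pointReflection_apply, vsub_eq_sub, vadd_eq_add, sub_zero, ← two_smul ℝ] at h0
  · rintro ⟨f, hf, hfv, hneg⟩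
    have h0 : f 0 = (2 : ℝ) • v := by
      rw [two_smul, ← sub_neg_eq_add, ← hneg v, hfv, sub_sub_cancel]
    exact hv (h0 ▸ SplitCrys.apply_zero_mem hf)

/-- Let `W` be the group of `3 × 3` signed permutation matrices, let
`H ≤ W` (a subgroup of `O(3)` all of whose elements are signed permutation matrices),
let `L` be a lattice in `ℝ³` with `H·L = L`, and let `Γ = Γ(L,H)`.  If `v ∈ ℝ³`
satisfies `2v ∉ L`, then the stabilizer `Γ_v = {γ ∈ Γ : γ(v) = v}` is isomorphic to a
subgroup of the symmetric group `S₄` (in particular no element of `Γ_v` has linear part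
`-I`). -/
theorem stabilizer_embeds_in_S4 (L : AddSubgroup (Fin 3 → ℝ)) (hL : IsLattice L)
    (H : Subgroup (Matrix.orthogonalGroup (Fin 3) ℝ))
    (hW : ∀ h ∈ H, IsSignedPerm ((h : Matrix (Fin 3) (Fin 3) ℝ)))
    (hHL : ∀ h ∈ H, (fun v => Matrix.mulVec ((h : Matrix (Fin 3) (Fin 3) ℝ)) v) ''
      (L : Set (Fin 3 → ℝ)) = (L : Set (Fin 3 → ℝ)))
    (v : Fin 3 → ℝ) (hv : (2 : ℝ) • v ∉ L) :
    (∃ φ : ↥(SplitCrys L H hHL ⊓ MulAction.stabilizer (Equiv.Perm (Fin 3 → ℝ)) v) →*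
        Equiv.Perm (Fin 4), Function.Injective φ) ∧
    ¬ ∃ f : Equiv.Perm (Fin 3 → ℝ), f ∈ SplitCrys L H hHL ∧ f v = v ∧
        ∀ x, f x - f 0 = -x :=
  stabilizer_embeds_in_S4_general L H hW hHL v hv
end

section
/- Let L, L' be lattices in ℝ³ and let H, H' ≤ O(3) satisfy H·L = L and H'·L' = L'. Then the groups Γ(L,H) and Γ(L',H') are isomorphic as abstract groups if and only if the pairs (L,H) and (L',H') are arithmetically equivalent, i.e., if and only if there exists λ ∈ GL₃(ℝ) such that λ·L = L' and λHλ⁻¹ = H'. -/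
/-! The translations of `Γ(L,H)` are characterised group-theoretically as the elements that
commute with all their conjugates: if `g x = t + h x` commutes with its conjugate by the
translation by `l`, then `(1 - h)² l = 0`, and as `L` spans `ℝ³` this gives `(1 - h)² = 0`, which
for an orthogonal `h` forces `h = 1`. An abstract isomorphism therefore restricts to an additive
bijection `L → L'`, which extends linearly to some `λ ∈ GL₃(ℝ)` because `L` is the `ℤ`-span of a
basis. Comparing the images of `h t_l h⁻¹ = t_{h l}` shows that `λ h λ⁻¹` is the linear part of the
image of `h`. Conversely, conjugation by `x ↦ λ x` carries `Γ(L,H)` onto `Γ(L',H')`. -/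

open Matrix

local notation "ℝ³" => Fin 3 → ℝ

local notation "M₃" => Matrix (Fin 3) (Fin 3) ℝ

local notation "O₃" => orthogonalGroup (Fin 3) ℝ

theorem forall_commute_conj_of_surjective {G G' F : Type*} [Group G] [Group G'] [FunLike F G G']
    [MonoidHomClass F G G'] {f : F} (hf : Function.Surjective f) {g : G}
    (hg : ∀ a, Commute (a * g * a⁻¹) g) (a : G') : Commute (a * f g * a⁻¹) (f g) := by
  obtain ⟨b, rfl⟩ := hf a
  simpa only [map_mul, map_inv] using (hg b).map f

theorem Equiv.Perm.mul_addLeft_of_forall_apply_eq {n R : Type*} [Fintype n] [Ring R]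
    {f : Equiv.Perm (n → R)} {s : n → R} {A : Matrix n n R} (hf : ∀ x, f x = s + A *ᵥ x)
    (v : n → R) : f * Equiv.addLeft v = Equiv.addLeft (A *ᵥ v) * f := by
  ext1 x
  simp only [Equiv.Perm.mul_apply, Equiv.coe_addLeft, hf, mulVec_add]
  abel

theorem Matrix.ext_of_mulVec_eq_of_span_eq_top {n R : Type*} [Fintype n] [DecidableEq n]
    [CommRing R] {A B : Matrix n n R} {s : Set (n → R)} (hs : Submodule.span R s = ⊤)
    (h : ∀ v ∈ s, A *ᵥ v = B *ᵥ v) : A = B :=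
  Matrix.toLin'.injective (LinearMap.ext_on hs h)

theorem Matrix.eq_one_of_mem_orthogonalGroup_of_one_sub_sq_eq_zero {n R : Type*} [Fintype n]
    [DecidableEq n] [CommRing R] [PartialOrder R] [StarRing R] [StarOrderedRing R] [TrivialStar R]
    [NoZeroDivisors R] {h : Matrix n n R} (hh : h ∈ orthogonalGroup n R) (hsq : (1 - h) ^ 2 = 0) :
    h = 1 := by
  have hinv : h * (1 + (1 - h)) = 1 :=
    calc h * (1 + (1 - h)) = 1 - (1 - h) ^ 2 := by noncomm_ring
      _ = 1 := by rw [hsq, sub_zero]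
  have htr : hᵀ = 1 + (1 - h) :=
    calc hᵀ = hᵀ * h * (1 + (1 - h)) := by rw [mul_assoc, hinv, mul_one]
      _ = 1 + (1 - h) := by rw [(mem_orthogonalGroup_iff' _ _).1 hh, one_mul]
  have : (1 - h)ᴴ * (1 - h) = 0 :=
    calc (1 - h)ᴴ * (1 - h) = -(1 - h) ^ 2 := by
          rw [conjTranspose_eq_transpose_of_trivial, transpose_sub, transpose_one, htr]
          noncomm_ring
      _ = 0 := by rw [hsq, neg_zero]
  exact (sub_eq_zero.1 (conjTranspose_mul_self_eq_zero.1 this)).symm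

theorem Matrix.isUnit_det_of_span_image_eq_top {n K : Type*} [Fintype n] [DecidableEq n] [Field K]
    {A : Matrix n n K} {s : Set (n → K)} (hs : Submodule.span K (A.mulVec '' s) = ⊤) :
    IsUnit A.det := by
  rw [← isUnit_iff_isUnit_det, ← mulVec_surjective_iff_isUnit, ← coe_mulVecLin,
    ← LinearMap.range_eq_top, eq_top_iff, ← hs, Submodule.span_le]
  exact Set.image_subset_range _ _

theorem Matrix.image_conj_eq_image_of_forall_exists {n K : Type*} [Fintype n] [DecidableEq n]
    [Field K] {A : Matrix n n K} (hA : IsUnit A.det) {S S' : Set (orthogonalGroup n K)}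
    (hS : ∀ h ∈ S, ∃ h' ∈ S', A * h = h' * A) (hS' : ∀ h' ∈ S', ∃ h ∈ S, A⁻¹ * h' = h * A⁻¹) :
    (fun h : orthogonalGroup n K => A * h * A⁻¹) '' S =
      (fun h : orthogonalGroup n K => (h : Matrix n n K)) '' S' := by
  ext M
  constructor
  · rintro ⟨h, hh, rfl⟩
    obtain ⟨h', hh', hA'⟩ := hS h hh
    exact ⟨h', hh', by dsimp only; rw [hA', mul_assoc, mul_nonsing_inv _ hA, mul_one]⟩
  · rintro ⟨h', hh', rfl⟩
    obtain ⟨h, hh, hA'⟩ := hS' h' hh'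
    exact ⟨h, hh, by dsimp only; rw [mul_assoc, ← hA', ← mul_assoc, mul_nonsing_inv _ hA, one_mul]⟩

theorem Module.Basis.exists_linearMap_eq_of_coe_eq_span_int {ι K V W : Type*} [CommRing K]
    [AddCommGroup V] [Module K V] [AddCommGroup W] [Module K W] (b : Module.Basis ι K V)
    {L : AddSubgroup V} (hL : (L : Set V) = Submodule.span ℤ (Set.range b)) (φ : L →+ W) :
    ∃ f : V →ₗ[K] W, ∀ l : L, f l = φ l := by
  have hmem {x : V} (hx : x ∈ Submodule.span ℤ (Set.range b)) : x ∈ L := by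
    rwa [← SetLike.mem_coe, hL]
  refine ⟨b.constr K fun i => φ ⟨b i, hmem (Submodule.subset_span ⟨i, rfl⟩)⟩, fun ⟨l, hl⟩ => ?_⟩
  rw [← SetLike.mem_coe, hL] at hl
  induction hl using Submodule.span_induction with
  | mem x hx => obtain ⟨i, rfl⟩ := hx; exact b.constr_basis K _ i
  | zero => exact (map_zero _).trans (map_zero φ).symm
  | add x y hx hy ihx ihy =>
    rw [map_add, ihx (hmem hx), ihy (hmem hy), ← map_add]
    rfl
  | smul n x hx ih =>
    rw [map_zsmul, ih (hmem hx), ← map_zsmul]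
    rfl

theorem IsLattice.span_eq_top {L : AddSubgroup ℝ³} (hL : IsLattice L) :
    Submodule.span ℝ (L : Set ℝ³) = ⊤ := by
  obtain ⟨b, hb⟩ := hL
  rw [eq_top_iff, ← b.span_eq, hb]
  exact Submodule.span_mono Submodule.subset_span

theorem IsLattice.exists_mulVec_eq {L : AddSubgroup ℝ³} (hL : IsLattice L) (φ : L →+ ℝ³) :
    ∃ A : M₃, ∀ l : L, A *ᵥ l = φ l := by
  obtain ⟨b, hb⟩ := hL
  obtain ⟨f, hf⟩ := b.exists_linearMap_eq_of_coe_eq_span_int hb φ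
  exact ⟨LinearMap.toMatrix' f, fun l => by rw [← toLin'_apply, toLin'_toMatrix', hf]⟩

open Equiv

namespace SplitCrys

variable {L L' : AddSubgroup ℝ³} {H H' : Subgroup O₃}
  {hHL : ∀ h ∈ H, (fun v => (h : M₃) *ᵥ v) '' (L : Set ℝ³) = (L : Set ℝ³)}
  {hH'L' : ∀ h ∈ H', (fun v => (h : M₃) *ᵥ v) '' (L' : Set ℝ³) = (L' : Set ℝ³)}

theorem apply_zero_mem_s18 {f : Perm ℝ³} (hf : f ∈ SplitCrys L H hHL) : f 0 ∈ L := by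
  obtain ⟨t, ht, h, -, hf⟩ := hf
  rwa [hf, mulVec_zero, add_zero]

def translation {l : ℝ³} (hl : l ∈ L) : SplitCrys L H hHL :=
  ⟨Equiv.addLeft l, l, hl, 1, H.one_mem, fun x => by simp⟩

@[simp]
theorem coe_translation {l : ℝ³} (hl : l ∈ L) :
    ((translation hl : SplitCrys L H hHL) : Perm ℝ³) = Equiv.addLeft l :=
  rfl

theorem translation_add {l₁ l₂ : ℝ³} (hl₁ : l₁ ∈ L) (hl₂ : l₂ ∈ L) :
    (translation (L.add_mem hl₁ hl₂) : SplitCrys L H hHL) = translation hl₁ * translation hl₂ :=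
  Subtype.ext (Equiv.addLeft_add l₁ l₂)

def ofOrthogonal {h : O₃} (hh : h ∈ H) : SplitCrys L H hHL :=
  ⟨(UnitaryGroup.toLinearEquiv h).toEquiv, 0, L.zero_mem, h, hh, fun x => by
    rw [zero_add]; rfl⟩

theorem commute_conj_translation {l : ℝ³} (hl : l ∈ L) (a : SplitCrys L H hHL) :
    Commute (a * translation hl * a⁻¹) (translation hl) := by
  obtain ⟨s, -, k, -, ha⟩ := a.2
  have hconj : ((a * translation hl * a⁻¹ : SplitCrys L H hHL) : Perm ℝ³) =
      Equiv.addLeft ((k : M₃) *ᵥ l) := by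
    rw [Subgroup.coe_mul, Subgroup.coe_mul, Subgroup.coe_inv, coe_translation,
      Perm.mul_addLeft_of_forall_apply_eq ha, mul_inv_cancel_right]
  refine Commute.of_map Subtype.val_injective (f := (SplitCrys L H hHL).subtype) ?_
  simp only [Subgroup.coe_subtype, hconj, coe_translation]
  rw [Commute, SemiconjBy, ← Equiv.addLeft_add, ← Equiv.addLeft_add, add_comm]

theorem coe_eq_addLeft_of_forall_commute (hspan : Submodule.span ℝ (L : Set ℝ³) = ⊤)
    {g : SplitCrys L H hHL} (hg : ∀ a, Commute (a * g * a⁻¹) g) :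
    (g : Perm ℝ³) = Equiv.addLeft ((g : Perm ℝ³) 0) := by
  obtain ⟨t, -, h, -, hgx⟩ := g.2
  have hsq : (1 - (h : M₃)) ^ 2 = 0 := by
    refine ext_of_mulVec_eq_of_span_eq_top hspan fun l hl => ?_
    set c := l - (h : M₃) *ᵥ l
    have hconj : ((translation hl * g * (translation hl)⁻¹ : SplitCrys L H hHL) :
        Perm ℝ³) = Equiv.addLeft c * g := by
      rw [Subgroup.coe_mul, Subgroup.coe_mul, Subgroup.coe_inv, coe_translation, mul_assoc,
        Equiv.neg_addLeft, Perm.mul_addLeft_of_forall_apply_eq hgx, ← mul_assoc,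
        ← Equiv.addLeft_add, mulVec_neg, ← sub_eq_add_neg]
    have hcomm : Commute (Equiv.addLeft c) (g : Perm ℝ³) := by
      have := (hg (translation hl)).map (SplitCrys L H hHL).subtype
      rw [Subgroup.coe_subtype, hconj] at this
      exact mul_right_cancel (this.eq.trans (mul_assoc _ _ _).symm)
    have hc : Equiv.addLeft c = Equiv.addLeft ((h : M₃) *ᵥ c) :=
      mul_right_cancel (hcomm.eq.trans (Perm.mul_addLeft_of_forall_apply_eq hgx c))
    have hlc : (1 - (h : M₃)) *ᵥ l = c := by rw [sub_mulVec, one_mulVec]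
    rw [zero_mulVec, sq, ← mulVec_mulVec, hlc, sub_mulVec, one_mulVec, sub_eq_zero]
    simpa using congrArg (· 0) hc
  have h1 := eq_one_of_mem_orthogonalGroup_of_one_sub_sq_eq_zero h.2 hsq
  ext1 x
  rw [hgx, hgx 0, h1, one_mulVec, mulVec_zero, add_zero]
  rfl

theorem coe_map_translation (hspan' : Submodule.span ℝ (L' : Set ℝ³) = ⊤)
    (e : SplitCrys L H hHL ≃* SplitCrys L' H' hH'L') {l : ℝ³} (hl : l ∈ L) :
    (e (translation hl) : Perm ℝ³) = Equiv.addLeft ((e (translation hl) : Perm ℝ³) 0) :=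
  coe_eq_addLeft_of_forall_commute hspan'
    (forall_commute_conj_of_surjective e.surjective (commute_conj_translation hl))

theorem exists_matrix_coe_map_translation (hL : IsLattice L) (hL' : IsLattice L')
    (e : SplitCrys L H hHL ≃* SplitCrys L' H' hH'L') :
    ∃ A : M₃, IsUnit A.det ∧ A.mulVec '' (L : Set ℝ³) = (L' : Set ℝ³) ∧
      ∀ l (hl : l ∈ L), (e (translation hl) : Perm ℝ³) = Equiv.addLeft (A *ᵥ l) := by
  let ψ : L →+ ℝ³ := AddMonoidHom.mk' (fun l => (e (translation l.2) : Perm _) 0)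
    fun l₁ l₂ => by
      have := congrArg (fun f => (e f : Perm ℝ³) 0) (translation_add l₁.2 l₂.2)
      simp only [map_mul, Subgroup.coe_mul, Perm.mul_apply] at this
      rw [this, coe_map_translation hL'.span_eq_top e l₁.2]
      simp
  obtain ⟨A, hA⟩ := hL.exists_mulVec_eq ψ
  have hspec (l : ℝ³) (hl : l ∈ L) : (e (translation hl) : Perm ℝ³) = Equiv.addLeft (A *ᵥ l) :=
    (coe_map_translation hL'.span_eq_top e hl).trans (congrArg _ (hA ⟨l, hl⟩).symm)
  have himage : A.mulVec '' (L : Set ℝ³) = (L' : Set ℝ³) := by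
    refine subset_antisymm ?_ fun l' hl' => ?_
    · rintro _ ⟨l, hl, rfl⟩
      simpa [hspec l hl] using apply_zero_mem_s18 (e (translation hl)).2
    · have hm := apply_zero_mem_s18 (e.symm (translation hl')).2
      have hsymm : translation hm = e.symm (translation hl') :=
        Subtype.ext (coe_map_translation hL.span_eq_top e.symm hl').symm
      refine ⟨_, hm, ?_⟩
      simpa [hspec _ hm] using congrArg (fun f => (e f : Perm ℝ³) 0) hsymm
  exact ⟨A, isUnit_det_of_span_image_eq_top (himage ▸ hL'.span_eq_top), himage, hspec⟩

theorem coe_symm_translation {e : SplitCrys L H hHL ≃* SplitCrys L' H' hH'L'} {A : M₃}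
    (hA : IsUnit A.det) (himage : A.mulVec '' (L : Set ℝ³) = (L' : Set ℝ³))
    (hspec : ∀ l (hl : l ∈ L), (e (translation hl) : Perm ℝ³) = Equiv.addLeft (A *ᵥ l))
    (l' : ℝ³) (hl' : l' ∈ L') :
    (e.symm (translation hl') : Perm ℝ³) = Equiv.addLeft (A⁻¹ *ᵥ l') := by
  obtain ⟨l, hl, rfl⟩ : l' ∈ A.mulVec '' (L : Set ℝ³) := himage ▸ hl'
  have : translation hl' = e (translation hl) := Subtype.ext (hspec l hl).symm
  rw [this, MulEquiv.symm_apply_apply, coe_translation, mulVec_mulVec, nonsing_inv_mul _ hA,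
    one_mulVec]

theorem exists_mul_eq_mul_of_coe_map_translation (hspan : Submodule.span ℝ (L : Set ℝ³) = ⊤)
    (e : SplitCrys L H hHL ≃* SplitCrys L' H' hH'L') {A : M₃}
    (hspec : ∀ l (hl : l ∈ L), (e (translation hl) : Perm ℝ³) = Equiv.addLeft (A *ᵥ l))
    {h : O₃} (hh : h ∈ H) : ∃ h' ∈ H', A * h = h' * A := by
  obtain ⟨s, -, h', hh', hs⟩ := (e (ofOrthogonal hh)).2
  refine ⟨h', hh', ext_of_mulVec_eq_of_span_eq_top hspan fun l hl => ?_⟩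
  have hhl := memL' hHL hh hl
  have hcomm : (ofOrthogonal hh * translation hl : SplitCrys L H hHL) =
      translation hhl * ofOrthogonal hh :=
    Subtype.ext (Perm.mul_addLeft_of_forall_apply_eq (fun x => (zero_add _).symm) l)
  have := congrArg (fun f => (e f : Perm ℝ³)) hcomm
  simp only [map_mul, Subgroup.coe_mul, hspec, Perm.mul_addLeft_of_forall_apply_eq hs] at this
  simpa using (congrArg (· 0) (mul_right_cancel this)).symm

theorem conj_mem {c : Perm ℝ³} {A B : M₃} (hc : ∀ x, c x = A *ᵥ x) (hc' : ∀ x, c⁻¹ x = B *ᵥ x)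
    (hL : ∀ t ∈ L, A *ᵥ t ∈ L') (hH : ∀ h ∈ H, ∃ h' ∈ H', A * h * B = h') {f : Perm ℝ³}
    (hf : f ∈ SplitCrys L H hHL) : c * f * c⁻¹ ∈ SplitCrys L' H' hH'L' := by
  obtain ⟨t, ht, h, hh, hf⟩ := hf
  obtain ⟨h', hh', hAB⟩ := hH h hh
  refine ⟨A *ᵥ t, hL t ht, h', hh', fun x => ?_⟩
  rw [Perm.mul_apply, Perm.mul_apply, hc', hf, hc, mulVec_add, mulVec_mulVec, mulVec_mulVec, ← hAB]

theorem map_conj_eq {c : Perm ℝ³} {A : M₃} (hA : IsUnit A.det)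
    (hc : ∀ x, c x = A *ᵥ x) (hc' : ∀ x, c⁻¹ x = A⁻¹ *ᵥ x)
    (hLL' : A.mulVec '' (L : Set ℝ³) = (L' : Set ℝ³))
    (hHH' : (fun h : O₃ => A * h * A⁻¹) '' (H : Set O₃) = (fun h : O₃ => (h : M₃)) '' H') :
    (SplitCrys L H hHL).map (MulAut.conj c : Perm ℝ³ →* Perm ℝ³) = SplitCrys L' H' hH'L' := by
  refine le_antisymm (Subgroup.map_le_iff_le_comap.2 fun f hf => ?_) fun f hf => ?_
  · refine conj_mem (hH'L' := hH'L') hc hc' (fun t ht => ?_) (fun h hh => ?_) hf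
    · rw [← SetLike.mem_coe, ← hLL']
      exact Set.mem_image_of_mem _ ht
    · obtain ⟨h', hh', hh'A⟩ : A * h * A⁻¹ ∈ _ := hHH' ▸ Set.mem_image_of_mem _ hh
      exact ⟨h', hh', hh'A.symm⟩
  · refine ⟨c⁻¹ * f * c, conj_mem hc' (by simpa using hc) ?_ ?_ hf, ?_⟩
    · intro t' ht'
      obtain ⟨t, ht, rfl⟩ : t' ∈ A.mulVec '' (L : Set ℝ³) := hLL' ▸ ht'
      rwa [mulVec_mulVec, nonsing_inv_mul _ hA, one_mulVec]
    · intro h' hh'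
      obtain ⟨h, hh, hh'A⟩ : (h' : M₃) ∈ _ := hHH' ▸ Set.mem_image_of_mem _ hh'
      refine ⟨h, hh, ?_⟩
      rw [← hh'A, ← mul_assoc, ← mul_assoc, nonsing_inv_mul _ hA, one_mul, mul_assoc,
        nonsing_inv_mul _ hA, mul_one]
    · simp only [MonoidHom.coe_coe, MulAut.conj_apply]
      group

theorem nonempty_mulEquiv_of_conj {A : M₃} (hA : IsUnit A.det)
    (hLL' : A.mulVec '' (L : Set ℝ³) = (L' : Set ℝ³))
    (hHH' : (fun h : O₃ => A * h * A⁻¹) '' (H : Set O₃) = (fun h : O₃ => (h : M₃)) '' H') :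
    Nonempty (SplitCrys L H hHL ≃* SplitCrys L' H' hH'L') := by
  let c := (A.toLinearEquiv' (invertibleOfIsUnitDet A hA)).toEquiv
  have hc (x : ℝ³) : c x = A *ᵥ x := rfl
  have hc' (x : ℝ³) : c⁻¹ x = A⁻¹ *ᵥ x := rfl
  exact ⟨((MulAut.conj c).subgroupMap _).trans
    (MulEquiv.subgroupCongr (map_conj_eq hA hc hc' hLL' hHH'))⟩

end SplitCrys

/-- Let `L, L'` be lattices in `ℝ³` and `H, H' ≤ O(3)` with
`H·L = L` and `H'·L' = L'`.  Then `Γ(L,H)` and `Γ(L',H')` are isomorphic as abstract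
groups if and only if the pairs `(L,H)` and `(L',H')` are arithmetically equivalent,
i.e., iff there is `λ ∈ GL₃(ℝ)` such that `λ·L = L'` and `λHλ⁻¹ = H'`. -/
theorem gammaLH_iso_iff_arithmetically_equivalent
    (L L' : AddSubgroup (Fin 3 → ℝ)) (hL : IsLattice L) (hL' : IsLattice L')
    (H H' : Subgroup (Matrix.orthogonalGroup (Fin 3) ℝ))
    (hHL : ∀ h ∈ H, (fun v => Matrix.mulVec ((h : Matrix (Fin 3) (Fin 3) ℝ)) v) ''
      (L : Set (Fin 3 → ℝ)) = (L : Set (Fin 3 → ℝ)))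
    (hH'L' : ∀ h ∈ H', (fun v => Matrix.mulVec ((h : Matrix (Fin 3) (Fin 3) ℝ)) v) ''
      (L' : Set (Fin 3 → ℝ)) = (L' : Set (Fin 3 → ℝ))) :
    Nonempty (↥(SplitCrys L H hHL) ≃* ↥(SplitCrys L' H' hH'L')) ↔
      ∃ lam : Matrix (Fin 3) (Fin 3) ℝ, IsUnit lam.det ∧
        (fun v => Matrix.mulVec lam v) '' (L : Set (Fin 3 → ℝ)) = (L' : Set (Fin 3 → ℝ)) ∧
        (fun h : Matrix.orthogonalGroup (Fin 3) ℝ =>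
            lam * (h : Matrix (Fin 3) (Fin 3) ℝ) * lam⁻¹) ''
          (H : Set (Matrix.orthogonalGroup (Fin 3) ℝ)) =
        (fun h : Matrix.orthogonalGroup (Fin 3) ℝ => (h : Matrix (Fin 3) (Fin 3) ℝ)) ''
          (H' : Set (Matrix.orthogonalGroup (Fin 3) ℝ)) := by
  refine ⟨fun ⟨e⟩ => ?_, fun ⟨A, hA, hLL', hHH'⟩ =>
    SplitCrys.nonempty_mulEquiv_of_conj hA hLL' hHH'⟩
  obtain ⟨A, hA, hLL', hspec⟩ := SplitCrys.exists_matrix_coe_map_translation hL hL' e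
  have hspec' := SplitCrys.coe_symm_translation hA hLL' hspec
  refine ⟨A, hA, hLL', image_conj_eq_image_of_forall_exists hA (fun h hh => ?_) fun h' hh' => ?_⟩
  · exact SplitCrys.exists_mul_eq_mul_of_coe_map_translation hL.span_eq_top e hspec hh
  · exact SplitCrys.exists_mul_eq_mul_of_coe_map_translation hL'.span_eq_top e.symm hspec' hh'
end
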